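/- arXiv:1303.0458 — 7 statements merged into one kernel-verified Lean document; each statement's English description precedes it below -/
import Mathlib

section
/- Let (Ω, F, μ) be a probability space, G ⊆ F a sub-σ-algebra, and X a real-valued random variable. Let K > 0 and r ≥ 1 be real numbers, and suppose that for every t ≥ 0 the conditional tail bound μ[1_{|X| > t} | G] ≤ exp(1 − (t/K)^r) holds almost everywhere. Then for every integer m ≥ 2, μ[|X|^m | G] ≤ e·m·K^m·m! holds almost everywhere. (Lemma 1 of the paper.) -/
open MeasureTheory Filter Set Real intervalIntegral

theorem aux_condexp_le {Ω : Type*} {F : MeasurableSpace Ω} (μ : Measure Ω) [IsProbabilityMeasure μ]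
    (G : MeasurableSpace Ω) (hG : G ≤ F) (f : Ω → ℝ) (C : ℝ) (hint : Integrable f μ)
    (h : ∀ s : Set Ω, MeasurableSet[G] s → ∫ ω in s, f ω ∂μ ≤ C * (μ s).toReal) :
    μ[f | G] ≤ᵐ[μ] fun _ => C := by
  haveI : IsFiniteMeasure (μ.trim hG) := by
    constructor
    rw [trim_measurableSet_eq hG MeasurableSet.univ]
    exact measure_lt_top μ _
  refine ae_le_of_ae_le_trim (hm := hG) ?_
  refine ae_le_of_forall_setIntegral_le (μ := μ.trim hG)
    (integrable_condExp.trim hG stronglyMeasurable_condExp)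
    (integrable_const C) ?_
  intro s hs hμs
  rw [← setIntegral_trim hG stronglyMeasurable_condExp hs]
  rw [setIntegral_const C, setIntegral_condExp hG hint hs, measureReal_def, trim_measurableSet_eq hG hs,
    smul_eq_mul, mul_comm]
  exact h s hs

/-- **Lemma 1 (conditional moment bound).** If `X` has a conditional exponential tail
`μ[1_{|X| > t} | G] ≤ exp (1 - (t/K)^r)` a.e. for all `t ≥ 0`, with `K > 0` and `r ≥ 1`,
then for all integers `m ≥ 2`, `μ[|X|^m | G] ≤ e * m * K^m * m!` a.e. -/
theorem conditional_moment_bound_of_conditional_tail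
    {Ω : Type*} (G : MeasurableSpace Ω) {F : MeasurableSpace Ω} (μ : Measure Ω) [IsProbabilityMeasure μ]
    (hG : G ≤ F)
    (X : Ω → ℝ) (hX : Measurable X)
    (K r : ℝ) (hK : 0 < K) (hr : 1 ≤ r)
    (htail : ∀ t : ℝ, 0 ≤ t →
      μ[Set.indicator {ω | t < |X ω|} (fun _ => (1 : ℝ)) | G] ≤ᵐ[μ]
        fun _ => Real.exp (1 - (t / K) ^ r)) :
    ∀ m : ℕ, 2 ≤ m →
      μ[fun ω => |X ω| ^ m | G] ≤ᵐ[μ]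
        fun _ => Real.exp 1 * m * K ^ m * (Nat.factorial m : ℝ) := by
  intro m hm
  have hA0 : ∀ t : ℝ, MeasurableSet[F] {ω | t < |X ω|} := fun t =>
    measurableSet_lt measurable_const hX.abs
  have habs : @Measurable Ω ℝ F _ fun ω => |X ω| := hX.abs
  letI : MeasurableSpace Ω := F
  haveI : SigmaFinite (μ.trim hG) := by
    have : IsFiniteMeasure (μ.trim hG) := by
      constructor
      rw [trim_measurableSet_eq hG MeasurableSet.univ]
      exact measure_lt_top μ _
    infer_instance
  have hm0 : m ≠ 0 := by omega
  have hm1 : (1:ℕ) ≤ m := by omega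
  have claim1 : ∀ t : ℝ, 0 ≤ t → ∀ s : Set Ω, MeasurableSet[G] s →
      μ (s ∩ {ω | t < |X ω|}) ≤ ENNReal.ofReal (Real.exp (1 - (t / K) ^ r)) * μ s := by
    intro t ht s hs
    have hA : MeasurableSet[F] {ω | t < |X ω|} :=
      hA0 t
    have hind_int : Integrable ({ω | t < |X ω|}.indicator (fun _ => (1:ℝ))) μ :=
      (integrable_const (1:ℝ)).indicator hA
    have h1 : ∫ x in s, {ω | t < |X ω|}.indicator (fun _ => (1:ℝ)) x ∂μ
        = (μ ({ω | t < |X ω|} ∩ s)).toReal := by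
      rw [setIntegral_indicator hA]
      simp [Set.inter_comm]
      rfl
    have h2 : ∫ x in s, {ω | t < |X ω|}.indicator (fun _ => (1:ℝ)) x ∂μ
        ≤ Real.exp (1 - (t / K) ^ r) * (μ s).toReal := by
      rw [← setIntegral_condExp hG hind_int hs]
      calc ∫ x in s, (μ[{ω | t < |X ω|}.indicator (fun _ => (1:ℝ))|G]) x ∂μ
          ≤ ∫ _ in s, Real.exp (1 - (t / K) ^ r) ∂μ :=
            setIntegral_mono_ae integrable_condExp.integrableOn
              ((integrable_const _).integrableOn) (htail t ht)
        _ = Real.exp (1 - (t / K) ^ r) * (μ s).toReal := by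
            rw [setIntegral_const]; rw [smul_eq_mul, mul_comm, measureReal_def]
    have h3 : (μ (s ∩ {ω | t < |X ω|})).toReal ≤ Real.exp (1 - (t / K) ^ r) * (μ s).toReal := by
      rw [inter_comm, ← h1]; exact h2
    calc μ (s ∩ {ω | t < |X ω|}) = ENNReal.ofReal ((μ (s ∩ {ω | t < |X ω|})).toReal) :=
          (ENNReal.ofReal_toReal (measure_ne_top _ _)).symm
      _ ≤ ENNReal.ofReal (Real.exp (1 - (t / K) ^ r) * (μ s).toReal) := ENNReal.ofReal_le_ofReal h3
      _ = ENNReal.ofReal (Real.exp (1 - (t / K) ^ r)) * ENNReal.ofReal ((μ s).toReal) :=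
          ENNReal.ofReal_mul (exp_nonneg _)
      _ = ENNReal.ofReal (Real.exp (1 - (t / K) ^ r)) * μ s := by
          rw [ENNReal.ofReal_toReal (measure_ne_top _ _)]
  have claim2 : ∀ s : Set Ω, MeasurableSet[G] s →
      ∫⁻ ω in s, ENNReal.ofReal (|X ω| ^ m) ∂μ ≤
        ENNReal.ofReal (K ^ m + Real.exp 1 * m * (K ^ m * (Nat.factorial (m - 1) : ℝ))) * μ s := by
    intro s hs
    have hm0 : m ≠ 0 := by omega
    have hm1 : (1:ℕ) ≤ m := by omega
    -- the interval integral of g t = m * t^(m-1)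
    have hGint : ∀ b : ℝ, ∫ t in (0:ℝ)..b, (m:ℝ) * t ^ (m - 1) = b ^ m := by
      intro b
      rw [intervalIntegral.integral_const_mul]
      rw [show (∫ x in (0:ℝ)..b, x ^ (m-1)) = (b ^ (m - 1 + 1) - 0 ^ (m - 1 + 1)) / ((m - 1 : ℕ) + 1 : ℝ) from integral_pow _]
      rw [Nat.sub_add_cancel hm1, zero_pow hm0, Nat.cast_sub hm1]
      have hmr : ((m:ℝ)) ≠ 0 := Nat.cast_ne_zero.mpr hm0
      push_cast
      field_simp
      rw [sub_add_cancel, sub_zero, mul_div_cancel_left₀ _ hmr]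
    -- layer cake
    have key : ∫⁻ ω in s, ENNReal.ofReal (|X ω| ^ m) ∂μ =
        ∫⁻ t in Ioi (0:ℝ), (μ.restrict s) {a | t < |X a|} * ENNReal.ofReal ((m:ℝ) * t ^ (m - 1)) := by
      have := lintegral_comp_eq_lintegral_meas_lt_mul (μ.restrict s)
        (f := fun ω => |X ω|) (g := fun t => (m:ℝ) * t ^ (m - 1))
        (Eventually.of_forall fun ω => abs_nonneg _)
        ((habs).aemeasurable)
        (fun t _ => ((continuous_const.mul (continuous_pow _)).intervalIntegrable _ _))
        (by filter_upwards [self_mem_ae_restrict measurableSet_Ioi] with t ht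
            have : (0:ℝ) < t := ht
            positivity)
      simp only [hGint] at this
      exact this
    rw [key, ← Ioc_union_Ioi_eq_Ioi hK.le,
      lintegral_union measurableSet_Ioi (Ioc_disjoint_Ioi le_rfl)]
    have piece1 : ∫⁻ t in Ioc (0:ℝ) K, (μ.restrict s) {a | t < |X a|} * ENNReal.ofReal ((m:ℝ) * t ^ (m - 1))
        ≤ ENNReal.ofReal (K ^ m) * μ s := by
      have hint : IntegrableOn (fun t : ℝ => (m:ℝ) * t ^ (m - 1)) (Ioc 0 K) volume :=
        (continuous_const.mul (continuous_pow _)).integrableOn_Ioc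
      have hnn : 0 ≤ᵐ[volume.restrict (Ioc (0:ℝ) K)] fun t : ℝ => (m:ℝ) * t ^ (m - 1) := by
        filter_upwards [self_mem_ae_restrict measurableSet_Ioc] with t ht
        have : (0:ℝ) < t := ht.1
        positivity
      calc ∫⁻ t in Ioc (0:ℝ) K, (μ.restrict s) {a | t < |X a|} * ENNReal.ofReal ((m:ℝ) * t ^ (m - 1))
          ≤ ∫⁻ t in Ioc (0:ℝ) K, μ s * ENNReal.ofReal ((m:ℝ) * t ^ (m - 1)) := by
            refine lintegral_mono fun t => mul_le_mul_left ?_ _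
            calc (μ.restrict s) {a | t < |X a|} ≤ (μ.restrict s) univ := measure_mono (subset_univ _)
              _ = μ s := by rw [Measure.restrict_apply_univ]
        _ = μ s * ∫⁻ t in Ioc (0:ℝ) K, ENNReal.ofReal ((m:ℝ) * t ^ (m - 1)) :=
            lintegral_const_mul' _ _ (measure_ne_top μ s)
        _ = μ s * ENNReal.ofReal (K ^ m) := by
            rw [← ofReal_integral_eq_lintegral_ofReal hint hnn,
              show (∫ t in Ioc (0:ℝ) K, (m:ℝ) * t ^ (m - 1)) = K ^ m from by
                rw [← integral_of_le hK.le]; exact hGint K]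
        _ = ENNReal.ofReal (K ^ m) * μ s := mul_comm _ _
    have piece2 : ∫⁻ t in Ioi K, (μ.restrict s) {a | t < |X a|} * ENNReal.ofReal ((m:ℝ) * t ^ (m - 1))
        ≤ ENNReal.ofReal (Real.exp 1 * m * (K ^ m * (Nat.factorial (m - 1) : ℝ))) * μ s := by
      set B : ℝ → ℝ := fun t => Real.exp 1 * Real.exp (-(K⁻¹ * t)) * ((m:ℝ) * t ^ (m - 1)) with hB_def
      have hBint : IntegrableOn B (Ioi 0) volume := by
        have base : IntegrableOn (fun x : ℝ => x ^ ((m - 1 : ℕ) : ℝ) * Real.exp (-K⁻¹ * x ^ (1:ℝ)))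
            (Ioi 0) volume :=
          integrableOn_rpow_mul_exp_neg_mul_rpow
            (lt_of_lt_of_le neg_one_lt_zero (Nat.cast_nonneg _)) zero_lt_one (inv_pos.mpr hK)
        have base2 : IntegrableOn (fun x : ℝ =>
            (Real.exp 1 * (m:ℝ)) * (x ^ ((m - 1 : ℕ) : ℝ) * Real.exp (-K⁻¹ * x ^ (1:ℝ))))
            (Ioi 0) volume := base.const_mul _
        refine IntegrableOn.congr_fun base2 ?_ measurableSet_Ioi
        intro t ht
        simp only [hB_def, Real.rpow_natCast, Real.rpow_one, neg_mul]
        ring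
      have hBnn : 0 ≤ᵐ[volume.restrict (Ioi (0:ℝ))] B := by
        filter_upwards [self_mem_ae_restrict measurableSet_Ioi] with t ht
        have : (0:ℝ) < t := ht
        positivity
      have tail_bound : ∀ t ∈ Ioi K,
          (μ.restrict s) {a | t < |X a|} * ENNReal.ofReal ((m:ℝ) * t ^ (m - 1))
            ≤ ENNReal.ofReal (B t) * μ s := by
        intro t ht
        have htK : K < t := ht
        have ht0 : (0:ℝ) < t := hK.trans htK
        have h1 : (μ.restrict s) {a | t < |X a|} ≤ ENNReal.ofReal (Real.exp (1 - (t / K) ^ r)) * μ s := by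
          rw [Measure.restrict_apply (hA0 t), inter_comm]
          exact claim1 t ht0.le s hs
        have h2 : Real.exp (1 - (t / K) ^ r) ≤ Real.exp 1 * Real.exp (-(K⁻¹ * t)) := by
          rw [← Real.exp_add]
          apply Real.exp_le_exp.mpr
          have hdiv : 1 ≤ t / K := (one_le_div hK).mpr htK.le
          have : t / K ≤ (t / K) ^ r := by
            nth_rewrite 1 [← Real.rpow_one (t / K)]
            exact Real.rpow_le_rpow_of_exponent_le hdiv hr
          have htK' : K⁻¹ * t = t / K := by rw [div_eq_inv_mul]
          linarith
        calc (μ.restrict s) {a | t < |X a|} * ENNReal.ofReal ((m:ℝ) * t ^ (m - 1))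
            ≤ (ENNReal.ofReal (Real.exp 1 * Real.exp (-(K⁻¹ * t))) * μ s) * ENNReal.ofReal ((m:ℝ) * t ^ (m - 1)) := by
              refine mul_le_mul_left (h1.trans (mul_le_mul_left (ENNReal.ofReal_le_ofReal h2) _)) _
          _ = ENNReal.ofReal (B t) * μ s := by
              have hBt : B t = Real.exp 1 * Real.exp (-(K⁻¹ * t)) * ((m:ℝ) * t ^ (m - 1)) := rfl
              rw [hBt,
                ENNReal.ofReal_mul (p := Real.exp 1 * Real.exp (-(K⁻¹ * t))) (by positivity),
                ENNReal.ofReal_mul (p := Real.exp 1) (Real.exp_nonneg 1)]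
              ring
      have hval : ∫ t in Ioi (0:ℝ), B t = Real.exp 1 * m * (K ^ m * (Nat.factorial (m - 1) : ℝ)) := by
        have e1 : ∀ t ∈ Ioi (0:ℝ), B t
            = (Real.exp 1 * m) * (t ^ ((m:ℝ) - 1) * Real.exp (-(K⁻¹ * t))) := by
          intro t ht
          simp only [hB_def]
          rw [show ((m:ℝ) - 1) = ((m - 1 : ℕ) : ℝ) from by push_cast [Nat.cast_sub hm1]; ring,
            Real.rpow_natCast]
          ring
        rw [setIntegral_congr_fun measurableSet_Ioi e1, MeasureTheory.integral_const_mul,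
          Real.integral_rpow_mul_exp_neg_mul_Ioi (by positivity) (inv_pos.mpr hK),
          show Real.Gamma (m:ℝ) = ((Nat.factorial (m-1) : ℕ) : ℝ) from by
            rw [show ((m:ℝ)) = ((m - 1 : ℕ) : ℝ) + 1 from by push_cast [Nat.cast_sub hm1]; ring]
            exact Real.Gamma_nat_eq_factorial _,
          one_div, inv_inv, Real.rpow_natCast]
        all_goals ring
      calc ∫⁻ t in Ioi K, (μ.restrict s) {a | t < |X a|} * ENNReal.ofReal ((m:ℝ) * t ^ (m - 1))
          ≤ ∫⁻ t in Ioi K, ENNReal.ofReal (B t) * μ s := by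
            refine setLIntegral_mono ?_ tail_bound
            have hBmeas : Measurable B := by
              rw [hB_def]; fun_prop
            exact hBmeas.ennreal_ofReal.mul_const _
        _ = (∫⁻ t in Ioi K, ENNReal.ofReal (B t)) * μ s := lintegral_mul_const' _ _ (measure_ne_top μ s)
        _ ≤ (∫⁻ t in Ioi (0:ℝ), ENNReal.ofReal (B t)) * μ s := by
            exact mul_le_mul_left (lintegral_mono_set (Ioi_subset_Ioi hK.le)) _
        _ = ENNReal.ofReal (∫ t in Ioi (0:ℝ), B t) * μ s := by
            rw [ofReal_integral_eq_lintegral_ofReal hBint hBnn]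
        _ = ENNReal.ofReal (Real.exp 1 * m * (K ^ m * (Nat.factorial (m - 1) : ℝ))) * μ s := by rw [hval]
    calc _ ≤ ENNReal.ofReal (K ^ m) * μ s + ENNReal.ofReal (Real.exp 1 * m * (K ^ m * (Nat.factorial (m - 1) : ℝ))) * μ s := add_le_add piece1 piece2
      _ = _ := by rw [← add_mul, ← ENNReal.ofReal_add (by positivity) (by positivity)]
  set D : ℝ := K ^ m + Real.exp 1 * m * (K ^ m * (Nat.factorial (m - 1) : ℝ)) with hD_def
  set C : ℝ := Real.exp 1 * m * K ^ m * (Nat.factorial m : ℝ) with hC_def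
  have hD_nonneg : 0 ≤ D := by positivity
  have hDC : D ≤ C := by
    rw [hD_def, hC_def]
    have h1 : (Nat.factorial m : ℝ) = m * (Nat.factorial (m - 1) : ℝ) := by
      rw [← Nat.cast_mul, Nat.mul_factorial_pred (by omega)]
    have h2 : (1:ℝ) ≤ (Nat.factorial (m - 1) : ℝ) := by
      exact_mod_cast Nat.one_le_iff_ne_zero.mpr (Nat.factorial_ne_zero _)
    have h3 : (2:ℝ) ≤ Real.exp 1 := by
      have := Real.add_one_le_exp 1; linarith
    have h4 : (2:ℝ) ≤ (m:ℝ) := by exact_mod_cast hm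
    have h5 : (0:ℝ) < K ^ m := by positivity
    rw [h1]
    have key : (1:ℝ) + Real.exp 1 * m * (Nat.factorial (m - 1) : ℝ)
        ≤ Real.exp 1 * m * ((m:ℝ) * (Nat.factorial (m - 1) : ℝ)) := by
      have hE4 : (4:ℝ) ≤ Real.exp 1 * m := by nlinarith
      have hfm1 : (1:ℝ) ≤ (Nat.factorial (m - 1) : ℝ) * ((m:ℝ) - 1) := by nlinarith
      have h8 : (4:ℝ) ≤ (Real.exp 1 * m) * ((Nat.factorial (m - 1) : ℝ) * ((m:ℝ) - 1)) := by
        calc (4:ℝ) = 4 * 1 := by ring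
          _ ≤ (Real.exp 1 * m) * ((Nat.factorial (m - 1) : ℝ) * ((m:ℝ) - 1)) :=
            mul_le_mul hE4 hfm1 zero_le_one (by linarith)
      nlinarith [h8]
    calc K ^ m + Real.exp 1 * ↑m * (K ^ m * ↑(Nat.factorial (m - 1)))
        = K ^ m * (1 + Real.exp 1 * ↑m * ↑(Nat.factorial (m - 1))) := by ring
      _ ≤ K ^ m * (Real.exp 1 * ↑m * ((m:ℝ) * ↑(Nat.factorial (m - 1)))) :=
          mul_le_mul_of_nonneg_left key h5.le
      _ = Real.exp 1 * ↑m * K ^ m * (↑m * ↑(Nat.factorial (m - 1))) := by ring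
  have hfm : Measurable fun ω => |X ω| ^ m := (habs).pow_const m
  have hfnn : ∀ ω, 0 ≤ |X ω| ^ m := fun ω => by positivity
  have hint : Integrable (fun ω => |X ω| ^ m) μ := by
    refine ⟨hfm.aestronglyMeasurable, ?_⟩
    rw [hasFiniteIntegral_iff_ofReal (Eventually.of_forall hfnn)]
    calc ∫⁻ ω, ENNReal.ofReal (|X ω| ^ m) ∂μ
        = ∫⁻ ω in Set.univ, ENNReal.ofReal (|X ω| ^ m) ∂μ := by rw [Measure.restrict_univ]
      _ ≤ ENNReal.ofReal D * μ Set.univ := claim2 Set.univ MeasurableSet.univ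
      _ < ⊤ := by
          rw [measure_univ, mul_one]
          exact ENNReal.ofReal_lt_top
  have claim4 : ∀ s : Set Ω, MeasurableSet[G] s →
      ∫ ω in s, |X ω| ^ m ∂μ ≤ C * (μ s).toReal := by
    intro s hs
    rw [integral_eq_lintegral_of_nonneg_ae (Eventually.of_forall hfnn)
      hfm.aestronglyMeasurable.restrict]
    have h := claim2 s hs
    have hfin : ENNReal.ofReal D * μ s ≠ ⊤ :=
      ENNReal.mul_ne_top ENNReal.ofReal_ne_top (measure_ne_top μ s)
    refine le_trans (ENNReal.toReal_mono hfin h) ?_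
    rw [ENNReal.toReal_mul, ENNReal.toReal_ofReal hD_nonneg]
    exact mul_le_mul_of_nonneg_right hDC ENNReal.toReal_nonneg
  exact aux_condexp_le μ G hG _ C hint claim4
end

section
/- Let (Ω, F, μ) be a probability space, G ⊆ F a sub-σ-algebra, and Z₁, Z₂ real-valued random variables. Suppose K₁, K₂ > 0 and r₁, r₂ ≥ 1 satisfy r₁r₂/(r₁+r₂) ≥ 1, and that for i = 1, 2 and every t ≥ 0 the conditional tail bound μ[1_{|Z_i| > t} | G] ≤ exp(1 − (t/K_i)^{r_i}) holds almost everywhere. Set r = r₁r₂/(r₁+r₂). Then for every real r* with 1 ≤ r* ≤ r, setting K* = max{(r*/r)^{1/r}·K₁K₂, (1+log 2)^{1/r}·K₁K₂}, one has for every t ≥ 0 that μ[1_{|Z₁Z₂| > t} | G] ≤ exp(1 − (t/K*)^{r*}) almost everywhere. (Lemma 2 of the paper.) -/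
open MeasureTheory Filter

/-- **Lemma 2 (conditional product tail bound).** If `Z₁` and `Z₂` have conditional
exponential tails with parameters `(K₁, r₁)` and `(K₂, r₂)`, where
`r := r₁r₂/(r₁+r₂) ≥ 1`, then for every `r*` with `1 ≤ r* ≤ r`, setting
`K* = max ((r*/r)^(1/r) * K₁K₂) ((1 + log 2)^(1/r) * K₁K₂)`, the product `Z₁Z₂`
satisfies `μ[1_{|Z₁Z₂| > t} | G] ≤ exp (1 - (t/K*)^{r*})` a.e. for all `t ≥ 0`. -/
theorem conditional_product_tail_bound
    {Ω : Type*} (G : MeasurableSpace Ω) {F : MeasurableSpace Ω} (μ : Measure Ω) [IsProbabilityMeasure μ]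
    (hG : G ≤ F)
    (Z₁ Z₂ : Ω → ℝ) (hZ₁ : Measurable Z₁) (hZ₂ : Measurable Z₂)
    (K₁ K₂ r₁ r₂ : ℝ) (hK₁ : 0 < K₁) (hK₂ : 0 < K₂) (hr₁ : 1 ≤ r₁) (hr₂ : 1 ≤ r₂)
    (hr : 1 ≤ r₁ * r₂ / (r₁ + r₂))
    (htail₁ : ∀ t : ℝ, 0 ≤ t →
      μ[Set.indicator {ω | t < |Z₁ ω|} (fun _ => (1 : ℝ)) | G] ≤ᵐ[μ]
        fun _ => Real.exp (1 - (t / K₁) ^ r₁))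
    (htail₂ : ∀ t : ℝ, 0 ≤ t →
      μ[Set.indicator {ω | t < |Z₂ ω|} (fun _ => (1 : ℝ)) | G] ≤ᵐ[μ]
        fun _ => Real.exp (1 - (t / K₂) ^ r₂)) :
    ∀ rstar : ℝ, 1 ≤ rstar → rstar ≤ r₁ * r₂ / (r₁ + r₂) →
      ∀ Kstar : ℝ,
        Kstar = max
          ((rstar / (r₁ * r₂ / (r₁ + r₂))) ^ (1 / (r₁ * r₂ / (r₁ + r₂))) * (K₁ * K₂))
          ((1 + Real.log 2) ^ (1 / (r₁ * r₂ / (r₁ + r₂))) * (K₁ * K₂)) →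
      ∀ t : ℝ, 0 ≤ t →
        μ[Set.indicator {ω | t < |Z₁ ω * Z₂ ω|} (fun _ => (1 : ℝ)) | G] ≤ᵐ[μ]
          fun _ => Real.exp (1 - (t / Kstar) ^ rstar) := by
  intro rstar hrs1 hrsr Kstar hKstar t ht
  set r : ℝ := r₁ * r₂ / (r₁ + r₂) with hrdef
  have hr₁0 : 0 < r₁ := by linarith
  have hr₂0 : 0 < r₂ := by linarith
  have hr12 : 0 < r₁ + r₂ := by linarith
  have hr0 : (0:ℝ) < r := by positivity
  have hK₁₂ : 0 < K₁ * K₂ := mul_pos hK₁ hK₂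
  have hlog2 : 0 < Real.log 2 := Real.log_pos (by norm_num)
  have hc0 : (0:ℝ) < (1 + Real.log 2) ^ (1 / r) := Real.rpow_pos_of_pos (by linarith) _
  have hKs_ge : (1 + Real.log 2) ^ (1 / r) * (K₁ * K₂) ≤ Kstar := by
    rw [hKstar]; exact le_max_right _ _
  have hKs0 : 0 < Kstar := lt_of_lt_of_le (mul_pos hc0 hK₁₂) hKs_ge
  have hSmeas : MeasurableSet[F] {ω | t < |Z₁ ω * Z₂ ω|} :=
    measurableSet_lt measurable_const (hZ₁.mul hZ₂).abs
  have hSF : MeasurableSet[F] {ω | t < |Z₁ ω * Z₂ ω|} := hSmeas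
  have hSint : Integrable (Set.indicator {ω | t < |Z₁ ω * Z₂ ω|} (fun _ => (1:ℝ))) μ :=
    Integrable.indicator (μ := μ) (integrable_const 1) hSF
  by_cases htK : t ≤ Kstar
  · -- trivial case: RHS ≥ 1 ≥ conditional expectation of indicator
    have hv1 : (t / Kstar) ^ rstar ≤ 1 :=
      Real.rpow_le_one (by positivity) (div_le_one_of_le₀ htK hKs0.le) (by linarith)
    have hre : (1:ℝ) ≤ Real.exp (1 - (t / Kstar) ^ rstar) :=
      Real.one_le_exp (by linarith)
    have hmono : μ[Set.indicator {ω | t < |Z₁ ω * Z₂ ω|} (fun _ => (1:ℝ)) | G] ≤ᵐ[μ]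
        μ[(fun _ => (1:ℝ)) | G] := by
      refine condExp_mono hSint (integrable_const 1) (Filter.Eventually.of_forall fun x => ?_)
      by_cases hx : x ∈ {ω | t < |Z₁ ω * Z₂ ω|} <;>
        simp [Set.indicator_of_mem, Set.indicator_of_notMem, hx, -abs_mul]
    refine hmono.trans ?_
    rw [condExp_const hG]
    exact Filter.Eventually.of_forall fun _ => hre
  · -- main case: t > Kstar
    push_neg at htK
    have ht0 : 0 < t := lt_trans hKs0 htK
    set s : ℝ := t / (K₁ * K₂) with hsdef
    have hs0 : 0 < s := div_pos ht0 hK₁₂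
    set a : ℝ := K₁ * s ^ (r / r₁) with hadef
    set b : ℝ := K₂ * s ^ (r / r₂) with hbdef
    have ha0 : 0 < a := mul_pos hK₁ (Real.rpow_pos_of_pos hs0 _)
    have hb0 : 0 < b := mul_pos hK₂ (Real.rpow_pos_of_pos hs0 _)
    have hsum : r / r₁ + r / r₂ = 1 := by
      field_simp [hrdef]
      rw [hrdef]; field_simp; ring
    have hab : a * b = t := by
      have h1 : a * b = K₁ * K₂ * (s ^ (r / r₁) * s ^ (r / r₂)) := by ring
      rw [h1, ← Real.rpow_add hs0, hsum, Real.rpow_one, hsdef,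
        mul_div_cancel₀ _ hK₁₂.ne']
    have hta : (a / K₁) ^ r₁ = s ^ r := by
      rw [hadef, mul_div_cancel_left₀ _ hK₁.ne', ← Real.rpow_mul hs0.le,
        div_mul_cancel₀ _ hr₁0.ne']
    have htb : (b / K₂) ^ r₂ = s ^ r := by
      rw [hbdef, mul_div_cancel_left₀ _ hK₂.ne', ← Real.rpow_mul hs0.le,
        div_mul_cancel₀ _ hr₂0.ne']
    -- indicator splitting
    have hS1 : MeasurableSet[F] {ω | a < |Z₁ ω|} :=
      measurableSet_lt measurable_const hZ₁.abs
    have hS2 : MeasurableSet[F] {ω | b < |Z₂ ω|} :=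
      measurableSet_lt measurable_const hZ₂.abs
    have hS1F : MeasurableSet[F] {ω | a < |Z₁ ω|} := hS1
    have hS2F : MeasurableSet[F] {ω | b < |Z₂ ω|} := hS2
    have hS1int : Integrable (Set.indicator {ω | a < |Z₁ ω|} (fun _ => (1:ℝ))) μ :=
      Integrable.indicator (μ := μ) (integrable_const 1) hS1F
    have hS2int : Integrable (Set.indicator {ω | b < |Z₂ ω|} (fun _ => (1:ℝ))) μ :=
      Integrable.indicator (μ := μ) (integrable_const 1) hS2F
    have hsplit : ∀ x, Set.indicator {ω | t < |Z₁ ω * Z₂ ω|} (fun _ => (1:ℝ)) x ≤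
        Set.indicator {ω | a < |Z₁ ω|} (fun _ => (1:ℝ)) x +
        Set.indicator {ω | b < |Z₂ ω|} (fun _ => (1:ℝ)) x := by
      intro x
      by_cases h1 : x ∈ {ω | a < |Z₁ ω|}
      · by_cases h2 : x ∈ {ω | b < |Z₂ ω|} <;>
          by_cases hx : x ∈ {ω | t < |Z₁ ω * Z₂ ω|} <;>
            simp [Set.indicator_of_mem, Set.indicator_of_notMem, h1, h2, hx, -abs_mul]
      · by_cases h2 : x ∈ {ω | b < |Z₂ ω|}
        · by_cases hx : x ∈ {ω | t < |Z₁ ω * Z₂ ω|} <;>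
            simp [Set.indicator_of_mem, Set.indicator_of_notMem, h1, h2, hx, -abs_mul]
        · have hx : x ∉ {ω | t < |Z₁ ω * Z₂ ω|} := by
            simp only [Set.mem_setOf_eq, not_lt] at h1 h2 ⊢
            calc |Z₁ x * Z₂ x| = |Z₁ x| * |Z₂ x| := abs_mul _ _
              _ ≤ a * b := by
                  apply mul_le_mul h1 h2 (abs_nonneg _) ha0.le
              _ = t := hab
          simp [Set.indicator_of_notMem, h1, h2, hx, -abs_mul]
    have hmono : μ[Set.indicator {ω | t < |Z₁ ω * Z₂ ω|} (fun _ => (1:ℝ)) | G] ≤ᵐ[μ]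
        μ[(Set.indicator {ω | a < |Z₁ ω|} (fun _ => (1:ℝ)) +
           Set.indicator {ω | b < |Z₂ ω|} (fun _ => (1:ℝ))) | G] :=
      condExp_mono hSint (hS1int.add hS2int) (Filter.Eventually.of_forall hsplit)
    have hadd := condExp_add (μ := μ) (m := G) hS1int hS2int
    have h1 := htail₁ a ha0.le
    have h2 := htail₂ b hb0.le
    -- numeric inequality
    have hnum : Real.exp (1 - (a / K₁) ^ r₁) + Real.exp (1 - (b / K₂) ^ r₂) ≤
        Real.exp (1 - (t / Kstar) ^ rstar) := by
      rw [hta, htb]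
      have hv1 : (1:ℝ) ≤ t / Kstar := by
        rw [le_div_iff₀ hKs0]; linarith
      have hvr : (t / Kstar) ^ rstar ≤ (t / Kstar) ^ r :=
        Real.rpow_le_rpow_of_exponent_le hv1 hrsr
      have hc : (1 + Real.log 2) ^ (1 / r) ≤ Kstar / (K₁ * K₂) := by
        rw [le_div_iff₀ hK₁₂]; exact hKs_ge
      have hcr : 1 + Real.log 2 ≤ (Kstar / (K₁ * K₂)) ^ r := by
        calc 1 + Real.log 2 = ((1 + Real.log 2) ^ (1 / r)) ^ r := by
              rw [← Real.rpow_mul (by linarith : (0:ℝ) ≤ 1 + Real.log 2),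
                one_div_mul_cancel hr0.ne', Real.rpow_one]
          _ ≤ (Kstar / (K₁ * K₂)) ^ r := Real.rpow_le_rpow hc0.le hc hr0.le
      have hsv : s = (t / Kstar) * (Kstar / (K₁ * K₂)) := by
        field_simp [hsdef]
        rw [hsdef]; field_simp
      have hsr : s ^ r = (t / Kstar) ^ r * (Kstar / (K₁ * K₂)) ^ r := by
        rw [hsv, Real.mul_rpow (by linarith : (0:ℝ) ≤ t / Kstar) (by positivity)]
      have hvr1 : (1:ℝ) ≤ (t / Kstar) ^ r := Real.one_le_rpow hv1 hr0.le
      have hkey : (t / Kstar) ^ rstar + Real.log 2 ≤ s ^ r := by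
        rw [hsr]
        nlinarith [hvr, hvr1, hcr, hlog2]
      have : Real.exp (1 - s ^ r) + Real.exp (1 - s ^ r) =
          Real.exp (Real.log 2) * Real.exp (1 - s ^ r) := by
        rw [Real.exp_log (by norm_num : (0:ℝ) < 2)]; ring
      rw [this, ← Real.exp_add]
      exact Real.exp_le_exp.2 (by linarith [hkey])
    refine hmono.trans ?_
    calc μ[(Set.indicator {ω | a < |Z₁ ω|} (fun _ => (1:ℝ)) +
           Set.indicator {ω | b < |Z₂ ω|} (fun _ => (1:ℝ))) | G]
        =ᵐ[μ] μ[Set.indicator {ω | a < |Z₁ ω|} (fun _ => (1:ℝ)) | G] +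
           μ[Set.indicator {ω | b < |Z₂ ω|} (fun _ => (1:ℝ)) | G] := hadd
      _ ≤ᵐ[μ] fun _ => Real.exp (1 - (t / Kstar) ^ rstar) := by
          filter_upwards [h1, h2] with x hx1 hx2
          simp only [Pi.add_apply]
          exact le_trans (add_le_add hx1 hx2) hnum
end

section
/- Let c > 0 and r ≥ 1 be real numbers, let r* be a real number with 1 ≤ r* ≤ r, and set K* = max{(r*/r)^{1/r}·c, (1+log 2)^{1/r}·c}. Then for every t ≥ 0, min(1, 2·exp(1 − (t/c)^r)) ≤ exp(1 − (t/K*)^{r*}). (Deterministic tail-comparison step in the proof of Lemma 2.) -/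
/-!
Since `r* ≤ r`, the second entry of the maximum defining `K*` is the larger one, so
`(K*/c)^r = 1 + log 2`. Writing `u = t/K*`, this turns `(t/c)^r` into `(1 + log 2) u^r`.
For `u ≤ 1` the right-hand side is at least `1`; for `u ≥ 1` we have `u^{r*} ≤ u^r` and
`log 2 ≤ u^r log 2`, and the second of these absorbs the factor `2 = exp (log 2)`.
-/

open Real

lemma one_le_exp_one_sub_rpow {x p : ℝ} (hx₀ : 0 ≤ x) (hx₁ : x ≤ 1) (hp : 0 ≤ p) :
    1 ≤ exp (1 - x ^ p) := by
  have : x ^ p ≤ 1 := rpow_le_one hx₀ hx₁ hp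
  exact one_le_exp (by linarith)

lemma two_mul_exp_one_sub_le {u p r : ℝ} (hu : 1 ≤ u) (hp : 0 ≤ p) (hpr : p ≤ r) :
    2 * exp (1 - u ^ r * (1 + log 2)) ≤ exp (1 - u ^ p) := by
  have hpow : u ^ p ≤ u ^ r := rpow_le_rpow_of_exponent_le hu hpr
  have hlog : log 2 ≤ u ^ r * log 2 :=
    le_mul_of_one_le_left (log_nonneg one_le_two) (one_le_rpow hu (hp.trans hpr))
  calc 2 * exp (1 - u ^ r * (1 + log 2))
      = exp (log 2 + (1 - u ^ r * (1 + log 2))) := by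
        rw [exp_add, exp_log two_pos]
    _ ≤ exp (1 - u ^ p) := exp_le_exp.mpr (by linarith)

lemma div_rpow_eq_div_rpow_mul_div_rpow {t K c : ℝ} (r : ℝ) (ht : 0 ≤ t) (hK : 0 < K)
    (hc : 0 < c) : (t / c) ^ r = (t / K) ^ r * (K / c) ^ r := by
  rw [← mul_rpow (by positivity) (by positivity), div_mul_div_cancel₀ hK.ne']

lemma max_rpow_mul_eq_right {a b c r : ℝ} (ha : 0 ≤ a) (hab : a ≤ b) (hc : 0 ≤ c)
    (hr : 0 ≤ r) : max (a ^ r * c) (b ^ r * c) = b ^ r * c :=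
  max_eq_right (mul_le_mul_of_nonneg_right (rpow_le_rpow ha hab hr) hc)

/-- Deterministic tail-comparison step in the proof of Lemma 2: for `c > 0`,
`r ≥ 1`, `1 ≤ r* ≤ r` and `K* = max ((r*/r)^(1/r) * c) ((1 + log 2)^(1/r) * c)`,
one has `min 1 (2 * exp (1 - (t/c)^r)) ≤ exp (1 - (t/K*)^{r*})` for all `t ≥ 0`. -/
theorem min_tail_le_exp_tail
    (c r : ℝ) (hc : 0 < c) (hr : 1 ≤ r)
    (rstar : ℝ) (h1 : 1 ≤ rstar) (h2 : rstar ≤ r)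
    (Kstar : ℝ)
    (hKstar : Kstar = max ((rstar / r) ^ (1 / r) * c) ((1 + Real.log 2) ^ (1 / r) * c)) :
    ∀ t : ℝ, 0 ≤ t →
      min 1 (2 * Real.exp (1 - (t / c) ^ r)) ≤ Real.exp (1 - (t / Kstar) ^ rstar) := by
  have hr₀ : 0 < r := one_pos.trans_le hr
  have hbase : 1 ≤ 1 + log 2 := le_add_of_nonneg_right (log_nonneg one_le_two)
  have hK : Kstar = (1 + log 2) ^ (1 / r) * c := by
    rw [hKstar, max_rpow_mul_eq_right (by positivity) _ hc.le (by positivity)]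
    exact (div_le_one_of_le₀ h2 hr₀.le).trans hbase
  have hrstar₀ : 0 ≤ rstar := zero_le_one.trans h1
  have hK₀ : 0 < Kstar := by rw [hK]; positivity
  have hKc : (Kstar / c) ^ r = 1 + log 2 := by
    rw [hK, mul_div_cancel_right₀ _ hc.ne', ← rpow_mul (by positivity),
      one_div_mul_cancel hr₀.ne', rpow_one]
  intro t ht
  rcases le_or_gt t Kstar with hle | hgt
  · exact (min_le_left _ _).trans
      (one_le_exp_one_sub_rpow (by positivity) ((div_le_one hK₀).mpr hle) hrstar₀)
  · refine (min_le_right _ _).trans ?_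
    rw [div_rpow_eq_div_rpow_mul_div_rpow r ht hK₀ hc, hKc]
    exact two_mul_exp_one_sub_le ((one_lt_div hK₀).mpr hgt).le hrstar₀ h2
end

section
/- Let Z₁ and Z₂ be real-valued random variables on a probability space, let K₁, K₂ > 0 and r₁, r₂ ≥ 1, and suppose that for i = 1, 2 and every t ≥ 0, P(|Z_i| > t) ≤ exp(1 − (t/K_i)^{r_i}). Then for every t > 0, P(|Z₁·Z₂| > t) ≤ 2·exp(1 − (t/(K₁K₂))^{r}), where r = r₁r₂/(r₁+r₂). (Product tail bound; first step in the proof of Lemma 2.) -/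
/-!
Split the level `t = (K₁ u) (K₂ v)` with `u = s ^ (r₂/(r₁+r₂))`, `v = s ^ (r₁/(r₁+r₂))` and
`s = t/(K₁K₂)`. If `|Z₁ Z₂| > t` then `|Z₁| > K₁ u` or `|Z₂| > K₂ v`, and the exponents are chosen
so that both tail bounds evaluate to the same `exp (1 - s ^ r)`, with `r = r₁r₂/(r₁+r₂)`.
-/

open MeasureTheory

lemma setOf_mul_lt_abs_mul_subset {Ω : Type*} (f g : Ω → ℝ) {a b : ℝ} (ha : 0 ≤ a) :
    {ω | a * b < |f ω * g ω|} ⊆ {ω | a < |f ω|} ∪ {ω | b < |g ω|} := by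
  intro ω hω
  by_contra h
  simp only [Set.mem_union, Set.mem_ofPred_eq, not_or, not_lt] at h hω
  rw [abs_mul] at hω
  exact hω.not_ge (mul_le_mul h.1 h.2 (abs_nonneg _) ha)

lemma measureReal_mul_lt_abs_mul_le {Ω : Type*} [MeasurableSpace Ω] (μ : Measure Ω)
    [IsFiniteMeasure μ] (f g : Ω → ℝ) {a b : ℝ} (ha : 0 ≤ a) :
    μ.real {ω | a * b < |f ω * g ω|} ≤ μ.real {ω | a < |f ω|} + μ.real {ω | b < |g ω|} :=
  (measureReal_mono (setOf_mul_lt_abs_mul_subset f g ha)).trans (measureReal_union_le _ _)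

lemma Real.rpow_div_add_rpow {s : ℝ} (hs : 0 ≤ s) (p q : ℝ) :
    (s ^ (q / (p + q))) ^ p = s ^ (p * q / (p + q)) := by
  rw [← Real.rpow_mul hs]
  ring_nf

lemma Real.rpow_div_add_mul_rpow_div_add {s : ℝ} (hs : 0 < s) {p q : ℝ} (hpq : p + q ≠ 0) :
    s ^ (q / (p + q)) * s ^ (p / (p + q)) = s := by
  rw [← Real.rpow_add hs, ← add_div, add_comm, div_self hpq, Real.rpow_one]

theorem product_tail_bound_general
    {Ω : Type*} [MeasurableSpace Ω] (μ : Measure Ω) [IsProbabilityMeasure μ]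
    (Z₁ Z₂ : Ω → ℝ)
    (K₁ K₂ r₁ r₂ : ℝ) (hK₁ : 0 < K₁) (hK₂ : 0 < K₂) (hr₁ : 1 ≤ r₁) (hr₂ : 1 ≤ r₂)
    (htail₁ : ∀ t : ℝ, 0 ≤ t →
      (μ {ω | t < |Z₁ ω|}).toReal ≤ Real.exp (1 - (t / K₁) ^ r₁))
    (htail₂ : ∀ t : ℝ, 0 ≤ t →
      (μ {ω | t < |Z₂ ω|}).toReal ≤ Real.exp (1 - (t / K₂) ^ r₂)) :
    ∀ t : ℝ, 0 < t →
      (μ {ω | t < |Z₁ ω * Z₂ ω|}).toReal ≤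
        2 * Real.exp (1 - (t / (K₁ * K₂)) ^ (r₁ * r₂ / (r₁ + r₂))) := by
  intro t ht
  set s := t / (K₁ * K₂)
  have hs : 0 < s := by positivity
  set u := s ^ (r₂ / (r₁ + r₂))
  set v := s ^ (r₁ / (r₁ + r₂))
  have hsplit : t = K₁ * u * (K₂ * v) := by
    rw [mul_mul_mul_comm, Real.rpow_div_add_mul_rpow_div_add hs (by linarith)]
    exact (mul_div_cancel₀ t (by positivity)).symm
  have hu : (K₁ * u / K₁) ^ r₁ = s ^ (r₁ * r₂ / (r₁ + r₂)) := by
    rw [mul_div_cancel_left₀ _ hK₁.ne', Real.rpow_div_add_rpow hs.le]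
  have hv : (K₂ * v / K₂) ^ r₂ = s ^ (r₁ * r₂ / (r₁ + r₂)) := by
    rw [mul_div_cancel_left₀ _ hK₂.ne']
    simpa only [add_comm r₂ r₁, mul_comm r₂ r₁] using Real.rpow_div_add_rpow hs.le r₂ r₁
  calc (μ {ω | t < |Z₁ ω * Z₂ ω|}).toReal
      ≤ μ.real {ω | K₁ * u < |Z₁ ω|} + μ.real {ω | K₂ * v < |Z₂ ω|} := by
        rw [hsplit]; exact measureReal_mul_lt_abs_mul_le μ Z₁ Z₂ (by positivity)
    _ ≤ Real.exp (1 - s ^ (r₁ * r₂ / (r₁ + r₂))) + Real.exp (1 - s ^ (r₁ * r₂ / (r₁ + r₂))) := by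
        gcongr
        · exact hu ▸ htail₁ _ (by positivity)
        · exact hv ▸ htail₂ _ (by positivity)
    _ = 2 * Real.exp (1 - s ^ (r₁ * r₂ / (r₁ + r₂))) := by ring

/-- Product tail bound (first step of the proof of Lemma 2): if
`P(|Zᵢ| > t) ≤ exp (1 - (t/Kᵢ)^{rᵢ})` for `i = 1, 2` and all `t ≥ 0`, then for all
`t > 0`, `P(|Z₁Z₂| > t) ≤ 2 * exp (1 - (t/(K₁K₂))^r)` with `r = r₁r₂/(r₁+r₂)`. -/
theorem product_tail_bound
    {Ω : Type*} [MeasurableSpace Ω] (μ : Measure Ω) [IsProbabilityMeasure μ]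
    (Z₁ Z₂ : Ω → ℝ) (hZ₁ : Measurable Z₁) (hZ₂ : Measurable Z₂)
    (K₁ K₂ r₁ r₂ : ℝ) (hK₁ : 0 < K₁) (hK₂ : 0 < K₂) (hr₁ : 1 ≤ r₁) (hr₂ : 1 ≤ r₂)
    (htail₁ : ∀ t : ℝ, 0 ≤ t →
      (μ {ω | t < |Z₁ ω|}).toReal ≤ Real.exp (1 - (t / K₁) ^ r₁))
    (htail₂ : ∀ t : ℝ, 0 ≤ t →
      (μ {ω | t < |Z₂ ω|}).toReal ≤ Real.exp (1 - (t / K₂) ^ r₂)) :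
    ∀ t : ℝ, 0 < t →
      (μ {ω | t < |Z₁ ω * Z₂ ω|}).toReal ≤
        2 * Real.exp (1 - (t / (K₁ * K₂)) ^ (r₁ * r₂ / (r₁ + r₂))) :=
  product_tail_bound_general μ Z₁ Z₂ K₁ K₂ r₁ r₂ hK₁ hK₂ hr₁ hr₂ htail₁ htail₂
end

section
/- Let (Ω, F, μ) be a probability space, G ⊆ F a sub-σ-algebra, and X, Y real-valued random variables in L⁴(μ). Let C = μ[XY | G] − μ[X | G]·μ[Y | G] and V = μ[X² | G] − (μ[X | G])², and assume V ≥ h₁ almost everywhere for some constant h₁ > 0. Define b = C / V and a = μ[Y | G] − b·μ[X | G], and let u = E[(a + b·X)²] − E[(μ[Y | G])²]. Then u = E[ C² / V ]; in particular u ≥ 0, and u = 0 if and only if C = 0 almost everywhere. (Marginal utility identity, equation (6) of the paper.) -/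
/-! Put `h = X - μ[X|G]`, so that `a + b X = μ[Y|G] + b h` with `μ[Y|G]` and `b` both
`G`-measurable. The cross term `E[μ[Y|G] b h]` vanishes because `μ[h|G] = 0`, and pulling the
`G`-measurable factor `b²` out of the conditional expectation gives
`E[b² h²] = E[b² Var[X|G]] = E[C² / V]`. A priori `b h` need not be square integrable, so this
last step is carried out for Lebesgue integrals of nonnegative functions, where the pull-out
property needs no integrability and in turn yields the integrability of `(b h)²`. -/

open MeasureTheory ProbabilityTheory
open scoped ENNReal

instance ENNReal.HolderTriple.instFourFourTwo : ENNReal.HolderTriple 4 4 2 where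
  inv_add_inv_eq_inv := by
    rw [← two_mul, show (4 : ℝ≥0∞) = 2 * 2 by norm_num, ENNReal.mul_inv (by simp) (by simp),
      ← mul_assoc, ENNReal.mul_inv_cancel (by simp) (by simp), one_mul]

section

variable {Ω : Type*} {m m0 : MeasurableSpace Ω} {μ : Measure Ω}

theorem lintegral_mul_condLExp (hm : m ≤ m0) [SigmaFinite (μ.trim hm)] {φ X : Ω → ℝ≥0∞}
    (hφ : Measurable[m] φ) (hX : AEMeasurable X μ) :
    ∫⁻ ω, φ ω * μ⁻[X|m] ω ∂μ = ∫⁻ ω, φ ω * X ω ∂μ := by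
  have htrim : (μ.withDensity μ⁻[X|m]).trim hm = (μ.withDensity X).trim hm := by
    refine @Measure.ext _ m _ _ fun s hs => ?_
    rw [trim_measurableSet_eq hm hs, trim_measurableSet_eq hm hs, withDensity_apply _ (hm s hs),
      withDensity_apply _ (hm s hs), setLIntegral_condLExp hm μ X hs]
  have hφμ : AEMeasurable φ μ := (hφ.mono hm le_rfl).aemeasurable
  calc ∫⁻ ω, φ ω * μ⁻[X|m] ω ∂μ = ∫⁻ ω, φ ω ∂((μ.withDensity μ⁻[X|m]).trim hm) := by
        rw [lintegral_trim hm hφ, lintegral_withDensity_eq_lintegral_mul₀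
          (measurable_condLExp' m μ X).aemeasurable hφμ]
        simp_rw [Pi.mul_apply, mul_comm]
    _ = ∫⁻ ω, φ ω * X ω ∂μ := by
        rw [htrim, lintegral_trim hm hφ, lintegral_withDensity_eq_lintegral_mul₀ hX hφμ]
        simp_rw [Pi.mul_apply, mul_comm]

theorem lintegral_ofReal_mul_condExp (hm : m ≤ m0) [SigmaFinite (μ.trim hm)] {φ ψ : Ω → ℝ}
    (hφ : StronglyMeasurable[m] φ) (hφ0 : 0 ≤ φ) (hψ : Integrable ψ μ) (hψ0 : 0 ≤ᵐ[μ] ψ) :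
    ∫⁻ ω, ENNReal.ofReal (φ ω * μ[ψ|m] ω) ∂μ = ∫⁻ ω, ENNReal.ofReal (φ ω * ψ ω) ∂μ := by
  simp_rw [ENNReal.ofReal_mul (hφ0 _)]
  rw [← lintegral_mul_condLExp hm hφ.measurable.ennreal_ofReal
    hψ.aemeasurable.ennreal_ofReal]
  refine lintegral_congr_ae ?_
  filter_upwards [condLExp_ofReal m hψ hψ0] with ω hω
  rw [hω]

theorem integrable_mul_of_integrable_mul_condExp (hm : m ≤ m0) [SigmaFinite (μ.trim hm)]
    {φ ψ : Ω → ℝ} (hφ : StronglyMeasurable[m] φ) (hφ0 : 0 ≤ φ) (hψ : Integrable ψ μ)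
    (hψ0 : 0 ≤ᵐ[μ] ψ) (hφψ : Integrable (fun ω => φ ω * μ[ψ|m] ω) μ) :
    Integrable (fun ω => φ ω * ψ ω) μ := by
  refine ⟨(hφ.mono hm).aestronglyMeasurable.mul hψ.aestronglyMeasurable, ?_⟩
  have hprod0 : 0 ≤ᵐ[μ] fun ω => φ ω * ψ ω := by
    filter_upwards [hψ0] with ω hω using mul_nonneg (hφ0 ω) hω
  have hcond0 : 0 ≤ᵐ[μ] fun ω => φ ω * μ[ψ|m] ω := by
    filter_upwards [condExp_nonneg (m := m) hψ0] with ω hω using mul_nonneg (hφ0 ω) hω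
  rw [hasFiniteIntegral_iff_ofReal hprod0, ← lintegral_ofReal_mul_condExp hm hφ hφ0 hψ hψ0,
    ← hasFiniteIntegral_iff_ofReal hcond0]
  exact hφψ.hasFiniteIntegral

theorem integral_mul_condExp_of_nonneg (hm : m ≤ m0) [SigmaFinite (μ.trim hm)]
    {φ ψ : Ω → ℝ} (hφ : StronglyMeasurable[m] φ) (hφ0 : 0 ≤ φ) (hψ : Integrable ψ μ)
    (hψ0 : 0 ≤ᵐ[μ] ψ) :
    ∫ ω, φ ω * μ[ψ|m] ω ∂μ = ∫ ω, φ ω * ψ ω ∂μ := by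
  have hprod0 : 0 ≤ᵐ[μ] fun ω => φ ω * ψ ω := by
    filter_upwards [hψ0] with ω hω using mul_nonneg (hφ0 ω) hω
  have hcond0 : 0 ≤ᵐ[μ] fun ω => φ ω * μ[ψ|m] ω := by
    filter_upwards [condExp_nonneg (m := m) hψ0] with ω hω using mul_nonneg (hφ0 ω) hω
  rw [integral_eq_lintegral_of_nonneg_ae hprod0
      ((hφ.mono hm).aestronglyMeasurable.mul hψ.aestronglyMeasurable),
    integral_eq_lintegral_of_nonneg_ae hcond0
      ((hφ.mono hm).aestronglyMeasurable.mul
        (stronglyMeasurable_condExp.mono hm).aestronglyMeasurable),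
    lintegral_ofReal_mul_condExp hm hφ hφ0 hψ hψ0]

theorem integral_mul_sub_condExp_eq_zero (hm : m ≤ m0) [SigmaFinite (μ.trim hm)] {g X : Ω → ℝ}
    (hg : StronglyMeasurable[m] g) (hX : Integrable X μ)
    (hgX : Integrable (fun ω => g ω * (X ω - μ[X|m] ω)) μ) :
    ∫ ω, g ω * (X ω - μ[X|m] ω) ∂μ = 0 := by
  have hcentered : μ[X - μ[X|m]|m] =ᵐ[μ] 0 := by
    filter_upwards [condExp_sub (m := m) hX integrable_condExp] with ω hω
    rw [hω, Pi.sub_apply, condExp_of_stronglyMeasurable hm stronglyMeasurable_condExp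
      integrable_condExp, sub_self, Pi.zero_apply]
  calc ∫ ω, g ω * (X ω - μ[X|m] ω) ∂μ = ∫ ω, μ[g * (X - μ[X|m])|m] ω ∂μ :=
        (integral_condExp hm).symm
    _ = ∫ ω, g ω * μ[X - μ[X|m]|m] ω ∂μ :=
        integral_congr_ae (condExp_mul_of_stronglyMeasurable_left hg hgX
          (hX.sub integrable_condExp))
    _ = 0 := by
        rw [integral_congr_ae (hcentered.mono fun ω hω => by rw [hω, Pi.zero_apply, mul_zero])]
        exact integral_zero _ _

theorem integral_sq_add_mul_sub_condExp (hm : m ≤ m0) [IsFiniteMeasure μ] {X c b : Ω → ℝ}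
    (hX : MemLp X 2 μ) (hc : StronglyMeasurable[m] c) (hc2 : MemLp c 2 μ)
    (hb : StronglyMeasurable[m] b) (hbV : Integrable (fun ω => b ω ^ 2 * Var[X; μ | m] ω) μ) :
    ∫ ω, (c ω + b ω * (X ω - μ[X|m] ω)) ^ 2 ∂μ
      = ∫ ω, c ω ^ 2 ∂μ + ∫ ω, b ω ^ 2 * Var[X; μ | m] ω ∂μ := by
  have : SigmaFinite (μ.trim hm) := (isFiniteMeasure_trim hm).toSigmaFinite
  set h : Ω → ℝ := fun ω => X ω - μ[X|m] ω
  have hh2 : Integrable (fun ω => h ω ^ 2) μ :=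
    (hX.sub (hX.condExp one_le_two)).integrable_sq
  have hsq : Integrable (fun ω => (b ω * h ω) ^ 2) μ := by
    simp_rw [mul_pow]
    exact integrable_mul_of_integrable_mul_condExp hm (hb.pow 2) (fun _ => sq_nonneg _) hh2
      (ae_of_all _ fun _ => sq_nonneg _) hbV
  have hcross : Integrable (fun ω => c ω * b ω * h ω) μ := by
    refine (hc2.integrable_sq.add hsq).mono' ?_ (ae_of_all _ fun ω => ?_)
    · exact ((hc.mul hb).mono hm).aestronglyMeasurable.mul
        (hX.aestronglyMeasurable.sub (stronglyMeasurable_condExp.mono hm).aestronglyMeasurable)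
    · rw [Real.norm_eq_abs, mul_assoc, abs_mul]
      show |c ω| * |b ω * h ω| ≤ c ω ^ 2 + (b ω * h ω) ^ 2
      nlinarith [sq_abs (c ω), sq_abs (b ω * h ω), sq_nonneg (|c ω| - |b ω * h ω|)]
  have horth : ∫ ω, c ω * b ω * h ω ∂μ = 0 :=
    integral_mul_sub_condExp_eq_zero hm (hc.mul hb) (hX.integrable one_le_two) hcross
  have hvar : ∫ ω, (b ω * h ω) ^ 2 ∂μ = ∫ ω, b ω ^ 2 * Var[X; μ | m] ω ∂μ := by
    simp_rw [mul_pow]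
    exact (integral_mul_condExp_of_nonneg hm (hb.pow 2) (fun _ => sq_nonneg _) hh2
      (ae_of_all _ fun _ => sq_nonneg _)).symm
  calc ∫ ω, (c ω + b ω * h ω) ^ 2 ∂μ
      = ∫ ω, c ω ^ 2 + 2 * (c ω * b ω * h ω) + (b ω * h ω) ^ 2 ∂μ := by
        congr 1; ext ω; ring
    _ = ∫ ω, c ω ^ 2 ∂μ + 2 * ∫ ω, c ω * b ω * h ω ∂μ + ∫ ω, (b ω * h ω) ^ 2 ∂μ := by
        rw [integral_add (f := fun ω => c ω ^ 2 + 2 * (c ω * b ω * h ω))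
            (hc2.integrable_sq.add (hcross.const_mul 2)) hsq,
          integral_add hc2.integrable_sq (hcross.const_mul 2), integral_const_mul]
    _ = ∫ ω, c ω ^ 2 ∂μ + ∫ ω, b ω ^ 2 * Var[X; μ | m] ω ∂μ := by
        rw [horth, hvar, mul_zero, add_zero]

theorem integrable_sq_div_of_le {f g : Ω → ℝ} {δ : ℝ} (hf : MemLp f 2 μ)
    (hg : AEMeasurable g μ) (hδ : 0 < δ) (hgδ : ∀ᵐ ω ∂μ, δ ≤ g ω) :
    Integrable (fun ω => f ω ^ 2 / g ω) μ := by
  refine (hf.integrable_sq.div_const δ).mono'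
    ((hf.aemeasurable.pow_const 2).div hg).aestronglyMeasurable ?_
  filter_upwards [hgδ] with ω hω
  rw [Real.norm_eq_abs, abs_of_nonneg (div_nonneg (sq_nonneg _) (hδ.le.trans hω))]
  gcongr

theorem integral_sq_div_eq_zero_iff {f g : Ω → ℝ} (hfg : Integrable (fun ω => f ω ^ 2 / g ω) μ)
    (hg : ∀ᵐ ω ∂μ, 0 < g ω) :
    ∫ ω, f ω ^ 2 / g ω ∂μ = 0 ↔ f =ᵐ[μ] 0 := by
  rw [integral_eq_zero_iff_of_nonneg_ae (hg.mono fun ω hω => div_nonneg (sq_nonneg _) hω.le) hfg]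
  refine ⟨fun h => ?_, fun h => ?_⟩
  · filter_upwards [h, hg] with ω hω hgω
    simpa [hgω.ne'] using hω
  · filter_upwards [h] with ω hω
    simp [hω]

end

/-- **Marginal utility identity (equation (6)).** With `C = Cov[X, Y | G]`,
`V = Var[X | G] ≥ h₁ > 0` a.e., `b = C/V`, `a = E[Y|G] - b·E[X|G]` and
`u = E[(a + b·X)²] - E[(E[Y|G])²]`, one has `u = E[C²/V]`; in particular `u ≥ 0`,
and `u = 0` if and only if `C = 0` almost everywhere. -/
theorem marginal_utility_identity
    {Ω : Type*} {F : MeasurableSpace Ω} (μ : Measure Ω) [IsProbabilityMeasure μ]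
    (G : MeasurableSpace Ω) (hG : G ≤ F)
    (X Y : Ω → ℝ) (hX : MemLp X 4 μ) (hY : MemLp Y 4 μ)
    (h₁ : ℝ) (hh₁ : 0 < h₁)
    (C : Ω → ℝ)
    (hC : C = fun ω => (μ[(fun ω' => X ω' * Y ω')|G]) ω - (μ[X|G]) ω * (μ[Y|G]) ω)
    (V : Ω → ℝ)
    (hV : V = fun ω => (μ[(fun ω' => X ω' ^ 2)|G]) ω - ((μ[X|G]) ω) ^ 2)
    (hVlb : ∀ᵐ ω ∂μ, h₁ ≤ V ω)
    (b : Ω → ℝ) (hb : b = fun ω => C ω / V ω)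
    (a : Ω → ℝ) (ha : a = fun ω => (μ[Y|G]) ω - b ω * (μ[X|G]) ω)
    (u : ℝ)
    (hu : u = ∫ ω, (a ω + b ω * X ω) ^ 2 ∂μ - ∫ ω, ((μ[Y|G]) ω) ^ 2 ∂μ) :
    u = ∫ ω, C ω ^ 2 / V ω ∂μ ∧ 0 ≤ u ∧ (u = 0 ↔ C =ᵐ[μ] 0) := by
  have : SigmaFinite (μ.trim hG) := (isFiniteMeasure_trim hG).toSigmaFinite
  have hX2 : MemLp X 2 μ := hX.mono_exponent (by norm_num)
  have hCm : StronglyMeasurable[G] C := hC ▸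
    stronglyMeasurable_condExp.sub (stronglyMeasurable_condExp.mul stronglyMeasurable_condExp)
  have hVm : StronglyMeasurable[G] V := hV ▸
    stronglyMeasurable_condExp.sub (stronglyMeasurable_condExp.pow 2)
  have hC2 : MemLp C 2 μ := hC ▸ ((hY.mul' hX).condExp one_le_two).sub
    ((hY.condExp (by norm_num)).mul' (hX.condExp (by norm_num)))
  have hV0 : ∀ᵐ ω ∂μ, 0 < V ω := hVlb.mono fun ω hω => hh₁.trans_le hω
  have hvar : (fun ω => b ω ^ 2 * Var[X; μ | G] ω) =ᵐ[μ] fun ω => C ω ^ 2 / V ω := by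
    have hVar : Var[X; μ | G] =ᵐ[μ] V := hV ▸ condVar_ae_eq_condExp_sq_sub_sq_condExp hG hX2
    filter_upwards [hVar, hV0] with ω hω hVω
    rw [hω, hb]
    field_simp
  have hW : Integrable (fun ω => C ω ^ 2 / V ω) μ :=
    integrable_sq_div_of_le hC2 (hVm.mono hG).measurable.aemeasurable hh₁ hVlb
  have hu' : u = ∫ ω, C ω ^ 2 / V ω ∂μ := by
    have hab : (fun ω => (a ω + b ω * X ω) ^ 2)
        = fun ω => (μ[Y|G] ω + b ω * (X ω - μ[X|G] ω)) ^ 2 := by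
      ext ω; rw [ha]; ring
    rw [hu, hab, integral_sq_add_mul_sub_condExp hG hX2 stronglyMeasurable_condExp
      ((hY.mono_exponent (by norm_num)).condExp one_le_two)
      (hb ▸ (hCm.measurable.div hVm.measurable).stronglyMeasurable) (hW.congr hvar.symm),
      integral_congr_ae hvar, add_sub_cancel_left]
  exact ⟨hu', hu' ▸ integral_nonneg_of_ae (hV0.mono fun ω hω => div_nonneg (sq_nonneg _) hω.le),
    hu' ▸ integral_sq_div_eq_zero_iff hW hV0⟩
end

section
/- Let (Ω, F, μ) be a probability space, G ⊆ F a sub-σ-algebra, B a G-measurable random variable with 0 ≤ B ≤ 1 and E[B²] ≤ c for some c > 0, and Z a real random variable such that for some K > 0 and r ≥ 1 and every t ≥ 0, μ[1_{|Z| > t} | G] ≤ exp(1 − (t/K)^r) almost everywhere. Then for every integer m ≥ 2, E[ B^m · |Z|^m ] ≤ e·m·K^m·m!·c. (Moment bound of type (jf) used in the proofs of Lemmas 5 and 7 for products of a spline basis function with a sub-Weibull random variable.) -/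
open MeasureTheory Real Set

lemma gamma_le_factorial {m : ℕ} (hm : 2 ≤ m) {r : ℝ} (hr : 1 ≤ r) :
    Real.Gamma ((m : ℝ) / r + 1) ≤ (Nat.factorial m : ℝ) := by
  have hm' : (2:ℝ) ≤ m := by exact_mod_cast hm
  have hr0 : (0:ℝ) < r := lt_of_lt_of_le one_pos hr
  have hx0 : 0 < (m : ℝ) / r := div_pos (by linarith) hr0
  have hxle : (m : ℝ) / r ≤ m := by
    rw [div_le_iff₀ hr0]
    nlinarith
  have hfact : ((Nat.factorial m : ℝ)) = Real.Gamma ((m : ℝ) + 1) := by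
    rw [← Real.Gamma_nat_eq_factorial m]
  rcases le_or_gt ((m:ℝ)/r + 1) 2 with h2 | h2
  · -- Gamma ≤ 1 on [1,2] by convexity
    have hseg : (m:ℝ)/r + 1 ∈ segment ℝ (1:ℝ) 2 := by
      rw [segment_eq_Icc (by norm_num : (1:ℝ) ≤ 2)]
      constructor <;> [linarith; linarith]
    have := Real.convexOn_Gamma.le_on_segment (by norm_num : (1:ℝ) ∈ Ioi 0)
      (by norm_num : (2:ℝ) ∈ Ioi 0) hseg
    rw [Real.Gamma_one, Real.Gamma_two] at this
    simp only [max_self] at this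
    calc Real.Gamma ((m:ℝ)/r + 1) ≤ 1 := this
    _ ≤ (Nat.factorial m : ℝ) := by exact_mod_cast Nat.one_le_iff_ne_zero.mpr (Nat.factorial_ne_zero m)
  · rw [hfact]
    refine Real.Gamma_strictMonoOn_Ici.monotoneOn (le_of_lt h2) ?_ (by linarith)
    simp only [Set.mem_Ici]; linarith

lemma tail_fun_eq {K r : ℝ} (hK : 0 < K) {m : ℕ} (hm : 2 ≤ m) {t : ℝ} (ht : 0 < t) :
    Real.exp (1 - (t/K)^r) * ((m:ℝ) * t^(m-1)) =
      (Real.exp 1 * m) * (t ^ ((m:ℝ) - 1) * Real.exp (-(K ^ (-r)) * t ^ r)) := by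
  have h1 : (t/K)^r = K ^ (-r) * t ^ r := by
    rw [Real.div_rpow ht.le hK.le, Real.rpow_neg hK.le]
    ring
  have h2 : t ^ ((m:ℝ) - 1) = t ^ (m - 1) := by
    rw [(by rw [Nat.cast_sub (by omega)]; norm_num : ((m:ℝ) - 1) = ((m - 1 : ℕ) : ℝ)),
      Real.rpow_natCast]
  rw [h1, h2, Real.exp_sub]
  ring_nf
  rw [Real.exp_neg]
  ring

lemma tail_integrable {K r : ℝ} (hK : 0 < K) (hr : 1 ≤ r) {m : ℕ} (hm : 2 ≤ m) :
    IntegrableOn (fun t : ℝ => Real.exp (1 - (t/K)^r) * ((m:ℝ) * t^(m-1))) (Set.Ioi 0) := by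
  have hb : 0 < K ^ (-r) := Real.rpow_pos_of_pos hK _
  have hq : (-1:ℝ) < (m:ℝ) - 1 := by
    have : (2:ℝ) ≤ m := by exact_mod_cast hm
    linarith
  have := (integrableOn_rpow_mul_exp_neg_mul_rpow hq (lt_of_lt_of_le one_pos hr) hb).const_mul (Real.exp 1 * m)
  refine MeasureTheory.IntegrableOn.congr_fun this (fun t ht => ?_) measurableSet_Ioi
  exact (tail_fun_eq hK hm ht).symm

lemma tail_integral_eq {K r : ℝ} (hK : 0 < K) (hr : 1 ≤ r) {m : ℕ} (hm : 2 ≤ m) :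
    ∫ t in Set.Ioi (0:ℝ), Real.exp (1 - (t/K)^r) * ((m:ℝ) * t^(m-1)) =
      Real.exp 1 * K ^ m * Real.Gamma ((m:ℝ)/r + 1) := by
  have hb : 0 < K ^ (-r) := Real.rpow_pos_of_pos hK _
  have hr0 : (0:ℝ) < r := lt_of_lt_of_le one_pos hr
  have hq : (-1:ℝ) < (m:ℝ) - 1 := by
    have : (2:ℝ) ≤ m := by exact_mod_cast hm
    linarith
  have hm0 : (0:ℝ) < m := by positivity
  rw [setIntegral_congr_fun measurableSet_Ioi
    (fun t ht => tail_fun_eq hK hm (Set.mem_Ioi.mp ht)),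
    MeasureTheory.integral_const_mul,
    integral_rpow_mul_exp_neg_mul_rpow hr0 hq hb]
  have hsum : (m:ℝ) - 1 + 1 = (m:ℝ) := by ring
  rw [hsum]
  have hKb : (K ^ (-r)) ^ (-(m:ℝ)/r) = K ^ m := by
    rw [← Real.rpow_natCast K m, ← Real.rpow_mul hK.le]
    congr 1
    field_simp
  rw [hKb]
  have hG : Real.Gamma ((m:ℝ)/r + 1) = (m:ℝ)/r * Real.Gamma ((m:ℝ)/r) := by
    rw [Real.Gamma_add_one (by positivity)]
  rw [hG]
  field_simp

lemma integrable_of_bound01 {Ω : Type*} {F : MeasurableSpace Ω} (μ : Measure Ω)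
    [IsProbabilityMeasure μ] (f : Ω → ℝ) (hf : Measurable[F] f)
    (h01 : ∀ ω, 0 ≤ f ω ∧ f ω ≤ 1) : Integrable f μ := by
  refine Integrable.mono' (integrable_const 1) hf.aestronglyMeasurable
    (Filter.Eventually.of_forall fun ω => ?_)
  rw [Real.norm_eq_abs, abs_of_nonneg (h01 ω).1]
  exact (h01 ω).2

lemma condexp_indicator_moment_bound
    {Ω : Type*} {F : MeasurableSpace Ω} (μ : Measure Ω) [IsProbabilityMeasure μ]
    (G : MeasurableSpace Ω) (hG : G ≤ F)
    (B Z : Ω → ℝ) (hBmeas : Measurable[G] B) (hZmeas : Measurable[F] Z)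
    (hB01 : ∀ ω, 0 ≤ B ω ∧ B ω ≤ 1)
    (c : ℝ) (hB2 : ∫ ω, B ω ^ 2 ∂μ ≤ c)
    {m : ℕ} (hm : 2 ≤ m) (t : ℝ) (a : ℝ) (ha : 0 ≤ a)
    (htail : μ[Set.indicator {ω | t < |Z ω|} (fun _ => (1 : ℝ)) | G] ≤ᵐ[μ]
        fun _ => a) :
    ∫ ω, B ω ^ m * Set.indicator {ω | t < |Z ω|} (fun _ => (1 : ℝ)) ω ∂μ ≤ c * a := by
  set s : Set Ω := {ω | t < |Z ω|} with hs_def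
  have hs : MeasurableSet[F] s := by
    have he : s = Z⁻¹' {x : ℝ | t < |x|} := rfl
    rw [he]
    exact hZmeas (measurableSet_lt measurable_const measurable_abs)
  set g : Ω → ℝ := s.indicator (fun _ => (1:ℝ)) with hg_def
  have hgmeas : Measurable[F] g := (measurable_const.indicator hs : Measurable[F] _)
  have hg01 : ∀ ω, 0 ≤ g ω ∧ g ω ≤ 1 := by
    intro ω
    by_cases h : ω ∈ s <;> simp [hg_def, Set.indicator_of_mem, Set.indicator_of_notMem, h]
  have hBF : Measurable[F] B := hBmeas.mono hG le_rfl
  have hb01 : ∀ ω, 0 ≤ B ω ^ m ∧ B ω ^ m ≤ 1 :=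
    fun ω => ⟨pow_nonneg (hB01 ω).1 m, pow_le_one₀ (hB01 ω).1 (hB01 ω).2⟩
  have bnd : ∀ (f : Ω → ℝ), Measurable[F] f → (∀ ω, 0 ≤ f ω ∧ f ω ≤ 1) → Integrable f μ := by
    intro f hf h01
    refine Integrable.mono' (integrable_const 1) hf.aestronglyMeasurable
      (Filter.Eventually.of_forall fun ω => ?_)
    rw [Real.norm_eq_abs, abs_of_nonneg (h01 ω).1]
    exact (h01 ω).2
  have hInt_g : Integrable g μ := bnd g hgmeas hg01
  have hInt_fg : Integrable (fun ω => B ω ^ m * g ω) μ := by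
    refine bnd _ ((hBF.pow_const m).mul hgmeas) (fun ω => ?_)
    exact ⟨mul_nonneg (hb01 ω).1 (hg01 ω).1,
      mul_le_one₀ (hb01 ω).2 (hg01 ω).1 (hg01 ω).2⟩
  have hInt_Bm : Integrable (fun ω => B ω ^ m) μ := bnd _ (hBF.pow_const m) hb01
  have hInt_B2 : Integrable (fun ω => B ω ^ 2) μ := by
    refine bnd _ (hBF.pow_const 2) (fun ω => ?_)
    exact ⟨pow_nonneg (hB01 ω).1 2, pow_le_one₀ (hB01 ω).1 (hB01 ω).2⟩
  have hfG : StronglyMeasurable[G] (fun ω => B ω ^ m) :=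
    ((hBmeas.pow_const m).stronglyMeasurable)
  have hpull : μ[(fun ω => B ω ^ m) * g|G] =ᵐ[μ] (fun ω => B ω ^ m) * μ[g|G] :=
    condExp_mul_of_stronglyMeasurable_left hfG hInt_fg hInt_g
  have key : ∫ ω, B ω ^ m * g ω ∂μ = ∫ ω, B ω ^ m * (μ[g|G]) ω ∂μ := by
    have h1 : ∫ ω, ((fun ω => B ω ^ m) * g) ω ∂μ = ∫ ω, (μ[(fun ω => B ω ^ m) * g|G]) ω ∂μ :=
      (integral_condExp hG).symm
    calc ∫ ω, B ω ^ m * g ω ∂μ = ∫ ω, (μ[(fun ω => B ω ^ m) * g|G]) ω ∂μ := h1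
    _ = ∫ ω, B ω ^ m * (μ[g|G]) ω ∂μ := integral_congr_ae hpull
  rw [key]
  have step2 : ∫ ω, B ω ^ m * (μ[g|G]) ω ∂μ ≤ ∫ ω, B ω ^ m * a ∂μ := by
    refine integral_mono_ae (integrable_condExp.congr hpull) ?_ ?_
    · exact hInt_Bm.mul_const a
    · filter_upwards [htail] with ω hω
      exact mul_le_mul_of_nonneg_left hω (hb01 ω).1
  refine step2.trans ?_
  rw [integral_mul_const]
  have hBm_le : ∫ ω, B ω ^ m ∂μ ≤ c := by
    refine le_trans (integral_mono hInt_Bm hInt_B2 (fun ω => ?_)) hB2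
    exact pow_le_pow_of_le_one (hB01 ω).1 (hB01 ω).2 hm
  exact mul_le_mul_of_nonneg_right hBm_le ha

/-- Moment bound of type (jf) used in the proofs of Lemmas 5 and 7: if `B` is
`G`-measurable with `0 ≤ B ≤ 1` and `E[B²] ≤ c`, and `Z` has conditional
exponential tail `μ[1_{|Z| > t} | G] ≤ exp (1 - (t/K)^r)` a.e. for all `t ≥ 0`,
then `E[B^m |Z|^m] ≤ e·m·K^m·m!·c` for every integer `m ≥ 2`. -/
theorem product_moment_bound
    {Ω : Type*} (G : MeasurableSpace Ω) {F : MeasurableSpace Ω} (μ : Measure Ω) [IsProbabilityMeasure μ]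
    (hG : G ≤ F)
    (B Z : Ω → ℝ) (hBmeas : Measurable[G] B) (hZmeas : Measurable Z)
    (hB01 : ∀ ω, 0 ≤ B ω ∧ B ω ≤ 1)
    (c : ℝ) (hc : 0 < c) (hB2 : ∫ ω, B ω ^ 2 ∂μ ≤ c)
    (K r : ℝ) (hK : 0 < K) (hr : 1 ≤ r)
    (htail : ∀ t : ℝ, 0 ≤ t →
      μ[Set.indicator {ω | t < |Z ω|} (fun _ => (1 : ℝ)) | G] ≤ᵐ[μ]
        fun _ => Real.exp (1 - (t / K) ^ r)) :
    ∀ m : ℕ, 2 ≤ m →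
      ∫ ω, B ω ^ m * |Z ω| ^ m ∂μ ≤
        Real.exp 1 * m * K ^ m * (Nat.factorial m : ℝ) * c := by
  intro m hm
  letI : MeasurableSpace Ω := F
  have hZF : Measurable[F] Z := hZmeas
  have hBF : Measurable[F] B := hBmeas.mono hG le_rfl
  have habsF : Measurable[F] fun ω => |Z ω| := hZF.abs
  have habspowF : Measurable[F] fun ω => |Z ω| ^ m := habsF.pow_const m
  have hZpm : Measurable[F] fun ω => ENNReal.ofReal (|Z ω| ^ m) := habspowF.ennreal_ofReal
  have hs : ∀ t : ℝ, MeasurableSet[F] {ω | t < |Z ω|} := by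
    intro t
    have he : {ω | t < |Z ω|} = Z⁻¹' {x : ℝ | t < |x|} := rfl
    rw [he]
    exact hZF (measurableSet_lt measurable_const measurable_abs)
  -- Step A : tail probability bound weighted by B^m
  have hA : ∀ t : ℝ, 0 ≤ t →
      ∫ ω, B ω ^ m * Set.indicator {ω | t < |Z ω|} (fun _ => (1:ℝ)) ω ∂μ ≤
        c * Real.exp (1 - (t/K)^r) :=
    fun t ht => condexp_indicator_moment_bound μ G hG B Z hBmeas hZF hB01 c hB2 hm t _
      (Real.exp_nonneg _) (htail t ht)
  -- the weighted measure ν = B^m dμ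
  set dens : Ω → ENNReal := fun ω => ENNReal.ofReal (B ω ^ m) with hdens_def
  have hdens : Measurable[F] dens :=
    (ENNReal.measurable_ofReal.comp (hBF.pow_const m) : Measurable[F] _)
  set ν := μ.withDensity dens with hν_def
  -- layer cake formula for ν
  have hint_pow : ∀ x : ℝ, ∫ u in (0:ℝ)..x, (m:ℝ) * u ^ (m-1) = x ^ m := by
    intro x
    rw [intervalIntegral.integral_const_mul, integral_pow]
    have h1 : m - 1 + 1 = m := by omega
    rw [h1, zero_pow (by omega : m ≠ 0)]
    field_simp
    rw [Nat.cast_sub (by omega : 1 ≤ m)]; push_cast; ring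
  have hlc : ∫⁻ ω, ENNReal.ofReal (|Z ω| ^ m) ∂ν =
      ∫⁻ t in Set.Ioi 0, ν {a | t < |Z a|} * ENNReal.ofReal ((m:ℝ) * t ^ (m-1)) := by
    have := @lintegral_comp_eq_lintegral_meas_lt_mul Ω F
      (fun ω => |Z ω|) (fun t => (m:ℝ) * t ^ (m-1)) ν
      (Filter.Eventually.of_forall fun ω => abs_nonneg _)
      (habsF.aemeasurable)
      (fun t _ => ((continuous_const.mul (continuous_pow _)).intervalIntegrable 0 t))
      ((ae_restrict_iff' measurableSet_Ioi).mpr (Filter.Eventually.of_forall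
        fun t ht => by
          have ht' : (0:ℝ) < t := ht
          positivity))
    rw [← this]
    refine lintegral_congr fun ω => ?_
    rw [hint_pow]
  -- withDensity identity
  have hwd : ∫⁻ ω, ENNReal.ofReal (|Z ω| ^ m) ∂ν =
      ∫⁻ ω, ENNReal.ofReal (B ω ^ m * |Z ω| ^ m) ∂μ := by
    rw [hν_def, @lintegral_withDensity_eq_lintegral_mul Ω F μ dens hdens _ hZpm]
    refine lintegral_congr fun ω => ?_
    simp only [Pi.mul_apply, hdens_def]
    rw [← ENNReal.ofReal_mul (pow_nonneg (hB01 ω).1 m)]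
  -- tail-set measure bound under ν
  have hνs : ∀ t : ℝ, 0 < t →
      ν {a | t < |Z a|} ≤ ENNReal.ofReal (c * Real.exp (1 - (t/K)^r)) := by
    intro t ht
    have hInd : Integrable (fun ω => B ω ^ m *
        Set.indicator {ω | t < |Z ω|} (fun _ => (1:ℝ)) ω) μ := by
      refine integrable_of_bound01 μ _
        ((hBF.pow_const m).mul (measurable_const.indicator (hs t))) (fun ω => ?_)
      by_cases hω : ω ∈ {ω | t < |Z ω|}
      · simp [Set.indicator_of_mem hω, pow_nonneg (hB01 ω).1,
          pow_le_one₀ (hB01 ω).1 (hB01 ω).2]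
      · simp [Set.indicator_of_notMem hω]
    have h1 : ν {a | t < |Z a|} = ∫⁻ a in {a | t < |Z a|}, dens a ∂μ :=
      withDensity_apply _ (hs t)
    have h2 : ∫⁻ a in {a | t < |Z a|}, dens a ∂μ =
        ∫⁻ a, ENNReal.ofReal (B a ^ m *
          Set.indicator {ω | t < |Z ω|} (fun _ => (1:ℝ)) a) ∂μ := by
      rw [← lintegral_indicator (hs t) dens]
      refine lintegral_congr fun ω => ?_
      by_cases hω : ω ∈ {ω | t < |Z ω|}
      · simp [Set.indicator_of_mem hω, hdens_def]
      · simp [Set.indicator_of_notMem hω]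
    have h3 : ∫⁻ a, ENNReal.ofReal (B a ^ m *
        Set.indicator {ω | t < |Z ω|} (fun _ => (1:ℝ)) a) ∂μ =
        ENNReal.ofReal (∫ a, B a ^ m *
          Set.indicator {ω | t < |Z ω|} (fun _ => (1:ℝ)) a ∂μ) := by
      refine (ofReal_integral_eq_lintegral_ofReal hInd
        (Filter.Eventually.of_forall fun ω => ?_)).symm
      by_cases hω : ω ∈ {ω | t < |Z ω|}
      · simp [Set.indicator_of_mem hω, pow_nonneg (hB01 ω).1]
      · simp [Set.indicator_of_notMem hω]
    rw [h1, h2, h3]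
    exact ENNReal.ofReal_le_ofReal (hA t ht.le)
  -- chain of bounds for the lintegral
  have hmain : ∫⁻ ω, ENNReal.ofReal (B ω ^ m * |Z ω| ^ m) ∂μ ≤
      ENNReal.ofReal (c * (Real.exp 1 * K ^ m * Real.Gamma ((m:ℝ)/r + 1))) := by
    rw [← hwd, hlc]
    have hIntOn : IntegrableOn (fun t : ℝ =>
        c * (Real.exp (1 - (t/K)^r) * ((m:ℝ) * t^(m-1)))) (Set.Ioi 0) :=
      (tail_integrable hK hr hm).const_mul c
    calc ∫⁻ t in Set.Ioi 0, ν {a | t < |Z a|} * ENNReal.ofReal ((m:ℝ) * t ^ (m-1))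
        ≤ ∫⁻ t in Set.Ioi 0, ENNReal.ofReal (c * Real.exp (1 - (t/K)^r)) *
            ENNReal.ofReal ((m:ℝ) * t ^ (m-1)) :=
          setLIntegral_mono' measurableSet_Ioi fun t ht =>
            mul_le_mul_left (hνs t ht) _
      _ = ∫⁻ t in Set.Ioi 0, ENNReal.ofReal
            (c * (Real.exp (1 - (t/K)^r) * ((m:ℝ) * t^(m-1)))) := by
          refine setLIntegral_congr_fun measurableSet_Ioi
            (fun t ht => ?_)
          rw [← ENNReal.ofReal_mul (by positivity)]
          ring_nf
      _ = ENNReal.ofReal (∫ t in Set.Ioi 0,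
            c * (Real.exp (1 - (t/K)^r) * ((m:ℝ) * t^(m-1)))) := by
          refine (ofReal_integral_eq_lintegral_ofReal hIntOn ?_).symm
          refine (ae_restrict_iff' measurableSet_Ioi).mpr
            (Filter.Eventually.of_forall fun t ht => ?_)
          have ht' : (0:ℝ) < t := ht
          positivity
      _ = ENNReal.ofReal (c * (Real.exp 1 * K ^ m * Real.Gamma ((m:ℝ)/r + 1))) := by
          rw [MeasureTheory.integral_const_mul, tail_integral_eq hK hr hm]
  -- back to the Bochner integral
  have hnnBZ : 0 ≤ᵐ[μ] fun ω => B ω ^ m * |Z ω| ^ m :=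
    Filter.Eventually.of_forall fun ω =>
      mul_nonneg (pow_nonneg (hB01 ω).1 m) (pow_nonneg (abs_nonneg _) m)
  have heq : ∫ ω, B ω ^ m * |Z ω| ^ m ∂μ =
      (∫⁻ ω, ENNReal.ofReal (B ω ^ m * |Z ω| ^ m) ∂μ).toReal :=
    integral_eq_lintegral_of_nonneg_ae hnnBZ
      ((hBF.pow_const m).mul habspowF).aestronglyMeasurable
  have hΓpos : 0 < Real.Gamma ((m:ℝ)/r + 1) :=
    Real.Gamma_pos_of_pos (by positivity)
  have hfin : ∫ ω, B ω ^ m * |Z ω| ^ m ∂μ ≤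
      c * (Real.exp 1 * K ^ m * Real.Gamma ((m:ℝ)/r + 1)) := by
    rw [heq]
    have h := ENNReal.toReal_mono ENNReal.ofReal_ne_top hmain
    rwa [ENNReal.toReal_ofReal (by positivity)] at h
  refine hfin.trans ?_
  have hΓ := gamma_le_factorial hm hr
  have hfac : (0:ℝ) < (Nat.factorial m : ℝ) := by positivity
  have hm1 : (1:ℝ) ≤ m := by
    have : (2:ℝ) ≤ m := by exact_mod_cast hm
    linarith
  have hKm : (0:ℝ) < K ^ m := by positivity
  have h1 : c * (Real.exp 1 * K ^ m * Real.Gamma ((m:ℝ)/r + 1)) ≤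
      c * (Real.exp 1 * K ^ m * (Nat.factorial m : ℝ)) :=
    mul_le_mul_of_nonneg_left
      (mul_le_mul_of_nonneg_left hΓ (by positivity)) hc.le
  refine h1.trans ?_
  have h2 := le_mul_of_one_le_left
    (by positivity : (0:ℝ) ≤ c * (Real.exp 1 * K ^ m * (Nat.factorial m : ℝ))) hm1
  exact h2.trans (le_of_eq (by ring))
end

section
/- Let (W₁, U₁), …, (W_n, U_n) be independent and identically distributed pairs of random variables, and suppose there exist K > 0 and r ≥ 1 such that for every t ≥ 0, the conditional tail bound E[1_{|U₁| > t} | W₁] ≤ exp(1 − (t/K)^r) holds almost surely. Let B be a measurable function with 0 ≤ B ≤ 1 and E[B(W₁)²] ≤ c for some c > 0. Then there exist positive constants b₁ and b₂, depending only on K and r, such that for every δ > 0, P( | Σ_{i=1}^n ( B(W_i)U_i − E[B(W₁)U₁] ) | ≥ δ ) ≤ 2·exp( − δ² / (b₁·c·n + b₂·δ) ). (Core concentration bound of Lemma 5, with the B-spline basis function abstracted to a bounded function B.) -/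
/-!
Conditioning on `W` turns the tail hypothesis into
`E[g(W) 1{|U| > τ}] ≤ e² E[g(W)] e^{-τ/K}` for every weight `0 ≤ g ≤ 1`, and the layer-cake
formula then gives `E[B(W)² U² e^{|U|/(2K)}] ≤ 16 e² K² E[B(W)²] ≤ 16 e² K² c`. With
`eˣ ≤ 1 + x + x² e^{|x|}` this makes each centred summand `B(Wᵢ)Uᵢ - E[B(W₁)U₁]` sub-exponential
with variance proxy `32 e² K² c` for `|t| ≤ 1/(2K)`. Independence adds the proxies, and the
Chernoff bound at `t = min (δ / (32 e² K² c n), 1/(2K))` gives the claim with `b₁ = 64 e² K²` and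
`b₂ = 4K`.
-/

open MeasureTheory ProbabilityTheory Real
open scoped Nat

lemma sub_one_le_rpow {u r : ℝ} (hu : 0 ≤ u) (hr : 1 ≤ r) : u - 1 ≤ u ^ r := by
  rcases le_total u 1 with h | h
  · linarith [rpow_nonneg hu r]
  · calc u - 1 ≤ u ^ (1 : ℝ) := by rw [rpow_one]; linarith
      _ ≤ u ^ r := rpow_le_rpow_of_exponent_le h hr

lemma exp_le_one_add_add_sq_mul_exp_abs (x : ℝ) : exp x ≤ 1 + x + x ^ 2 * exp |x| := by
  have hsq : x ^ 2 ≤ x ^ 2 * exp |x| :=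
    le_mul_of_one_le_right (sq_nonneg x) (one_le_exp (abs_nonneg x))
  rcases le_or_gt |x| 1 with hx | hx
  · linarith [(abs_le.mp (abs_exp_sub_one_sub_id_le hx)).2]
  rcases lt_abs.mp hx with hx | hx
  · have : exp x ≤ x ^ 2 * exp |x| := by
      rw [abs_of_pos (by linarith)]
      exact le_mul_of_one_le_left (exp_pos x).le (by nlinarith)
    linarith
  · have : exp x ≤ 1 := exp_le_one_iff.mpr (by linarith)
    nlinarith

lemma exists_chernoff_parameter_le {c s δ : ℝ} (hc : 0 < c) (hs : 0 < s) (hδ : 0 < δ) :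
    ∃ t ∈ Set.Icc 0 s, -(t * δ) + c * t ^ 2 / 2 ≤ -δ ^ 2 / (2 * c + 2 * δ / s) := by
  rw [neg_div]
  rcases le_total (δ / c) s with h | h
  · refine ⟨δ / c, ⟨by positivity, h⟩, ?_⟩
    calc -(δ / c * δ) + c * (δ / c) ^ 2 / 2 = -(δ ^ 2 / (2 * c)) := by field_simp; ring
      _ ≤ -(δ ^ 2 / (2 * c + 2 * δ / s)) := by
        gcongr
        linarith [show 0 < 2 * δ / s by positivity]
  · refine ⟨s, ⟨hs.le, le_rfl⟩, ?_⟩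
    have hcs : s * c ≤ δ := (le_div_iff₀ hc).mp h
    calc -(s * δ) + c * s ^ 2 / 2 ≤ -(δ ^ 2 / (2 * δ / s)) := by
          rw [show δ ^ 2 / (2 * δ / s) = s * δ / 2 by field_simp]
          nlinarith
      _ ≤ -(δ ^ 2 / (2 * c + 2 * δ / s)) := by
        gcongr
        linarith

lemma sq_mul_exp_eq_intervalIntegral (b y : ℝ) :
    y ^ 2 * exp (b * y) = ∫ τ in 0..y, (2 * τ + b * τ ^ 2) * exp (b * τ) := by
  rw [intervalIntegral.integral_eq_sub_of_hasDerivAt (f := fun τ => τ ^ 2 * exp (b * τ))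
    (fun τ _ => ?_) (Continuous.intervalIntegrable (by fun_prop) _ _)]
  · simp
  · refine ((hasDerivAt_pow 2 τ).mul ((hasDerivAt_id' τ).const_mul b).exp).congr_deriv ?_
    ring

lemma integrableOn_pow_mul_exp_neg_mul_Ioi (m : ℕ) {b : ℝ} (hb : 0 < b) :
    IntegrableOn (fun t : ℝ => t ^ m * exp (-(b * t))) (Set.Ioi 0) := by
  refine (integrableOn_rpow_mul_exp_neg_mul_rpow (p := 1) (s := m)
    (by linarith [(Nat.cast_nonneg m : (0 : ℝ) ≤ m)]) one_pos hb).congr_fun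
    (fun t _ => ?_) measurableSet_Ioi
  simp only [rpow_natCast, rpow_one, neg_mul]

lemma integral_pow_mul_exp_neg_mul_Ioi (m : ℕ) {b : ℝ} (hb : 0 < b) :
    ∫ t in Set.Ioi (0 : ℝ), t ^ m * exp (-(b * t)) = m ! / b ^ (m + 1) := by
  have h := integral_rpow_mul_exp_neg_mul_Ioi (a := m + 1) (by positivity) hb
  rw [add_sub_cancel_right, Gamma_nat_eq_factorial, ← Nat.cast_succ, rpow_natCast] at h
  simp_rw [rpow_natCast] at h
  rw [h, Nat.succ_eq_add_one, div_pow, one_pow]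
  ring

lemma lintegral_sq_mul_exp_le_of_tail {α : Type*} [MeasurableSpace α] (ν : Measure α)
    {f : α → ℝ} (hf : Measurable f) (hf0 : ∀ x, 0 ≤ f x) {C a : ℝ} (hC : 0 ≤ C) (ha : 0 < a)
    (htail : ∀ τ > 0, ν {x | τ < f x} ≤ ENNReal.ofReal (C * exp (-(a * τ)))) :
    ∫⁻ x, ENNReal.ofReal (f x ^ 2 * exp (a / 2 * f x)) ∂ν ≤ ENNReal.ofReal (16 * C / a ^ 2) := by
  set g : ℝ → ℝ := fun τ => (2 * τ + a / 2 * τ ^ 2) * exp (a / 2 * τ)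
  have hg : Continuous g := by fun_prop
  have hdecay : ∀ τ, g τ * exp (-(a * τ)) =
      2 * (τ ^ 1 * exp (-(a / 2 * τ))) + a / 2 * (τ ^ 2 * exp (-(a / 2 * τ))) := by
    intro τ
    have : exp (a / 2 * τ) * exp (-(a * τ)) = exp (-(a / 2 * τ)) := by
      rw [← exp_add]; congr 1; ring
    linear_combination (2 * τ + a / 2 * τ ^ 2) * this
  have ha2 : 0 < a / 2 := by positivity
  have hint1 := (integrableOn_pow_mul_exp_neg_mul_Ioi 1 ha2).const_mul 2
  have hint2 := (integrableOn_pow_mul_exp_neg_mul_Ioi 2 ha2).const_mul (a / 2)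
  have hg0 : ∀ τ > 0, 0 ≤ g τ := fun τ hτ => by have : (0 : ℝ) < τ := hτ; positivity
  simp_rw [sq_mul_exp_eq_intervalIntegral]
  rw [lintegral_comp_eq_lintegral_meas_lt_mul ν (Filter.Eventually.of_forall hf0)
    hf.aemeasurable (fun t _ => hg.intervalIntegrable _ _)
    ((ae_restrict_iff' measurableSet_Ioi).mpr (Filter.Eventually.of_forall hg0))]
  calc ∫⁻ τ in Set.Ioi 0, ν {x | τ < f x} * ENNReal.ofReal (g τ)
      ≤ ∫⁻ τ in Set.Ioi 0, ENNReal.ofReal (C * (g τ * exp (-(a * τ)))) := by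
        refine setLIntegral_mono' measurableSet_Ioi fun τ hτ => ?_
        rw [show C * (g τ * exp (-(a * τ))) = C * exp (-(a * τ)) * g τ by ring,
          ENNReal.ofReal_mul (mul_nonneg hC (exp_pos _).le)]
        gcongr
        exact htail τ hτ
    _ = ENNReal.ofReal (∫ τ in Set.Ioi 0, C * (g τ * exp (-(a * τ)))) := by
        refine (ofReal_integral_eq_lintegral_ofReal ?_ ?_).symm
        · simp_rw [hdecay]
          exact (hint1.add hint2).const_mul C
        · exact (ae_restrict_iff' measurableSet_Ioi).mpr
            (Filter.Eventually.of_forall fun τ hτ => by have := hg0 τ hτ; positivity)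
    _ = ENNReal.ofReal (16 * C / a ^ 2) := by
        simp_rw [hdecay]
        rw [integral_const_mul, integral_add hint1 hint2, integral_const_mul, integral_const_mul,
          integral_pow_mul_exp_neg_mul_Ioi 1 ha2, integral_pow_mul_exp_neg_mul_Ioi 2 ha2]
        congr 1
        simp only [Nat.factorial]
        field_simp
        ring

variable {Ω : Type*} {mΩ : MeasurableSpace Ω} {μ : Measure Ω}

/-- Sub-exponential moment generating function in the sense of Wainwright (*High-Dimensional
Statistics*, Def. 2.7): variance proxy `c` on the window `|t| ≤ s`. -/
def HasSubexponentialMGF (X : Ω → ℝ) (c s : ℝ) (μ : Measure Ω) : Prop :=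
  ∀ t, |t| ≤ s → Integrable (fun ω => exp (t * X ω)) μ ∧ mgf X μ t ≤ exp (c * t ^ 2 / 2)

namespace HasSubexponentialMGF

variable {X : Ω → ℝ} {c s : ℝ}

lemma neg (hX : HasSubexponentialMGF X c s μ) : HasSubexponentialMGF (-X) c s μ := by
  intro t ht
  obtain ⟨hint, hmgf⟩ := hX (-t) (by rwa [abs_neg])
  refine ⟨by simpa only [Pi.neg_apply, mul_neg, neg_mul] using hint, ?_⟩
  rw [mgf_neg]
  simpa only [neg_sq] using hmgf

lemma measureReal_ge_le [IsFiniteMeasure μ] (hX : HasSubexponentialMGF X c s μ)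
    (hc : 0 < c) (hs : 0 < s) {δ : ℝ} (hδ : 0 < δ) :
    μ.real {ω | δ ≤ X ω} ≤ exp (-δ ^ 2 / (2 * c + 2 * δ / s)) := by
  obtain ⟨t, ⟨ht0, hts⟩, hopt⟩ := exists_chernoff_parameter_le hc hs hδ
  obtain ⟨hint, hmgf⟩ := hX t (by rwa [abs_of_nonneg ht0])
  calc μ.real {ω | δ ≤ X ω} ≤ exp (-t * δ) * mgf X μ t := measure_ge_le_exp_mul_mgf δ ht0 hint
    _ ≤ exp (-t * δ) * exp (c * t ^ 2 / 2) := by gcongr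
    _ = exp (-(t * δ) + c * t ^ 2 / 2) := by rw [← exp_add, neg_mul]
    _ ≤ exp (-δ ^ 2 / (2 * c + 2 * δ / s)) := exp_le_exp.mpr hopt

lemma measureReal_abs_ge_le [IsFiniteMeasure μ] (hX : HasSubexponentialMGF X c s μ)
    (hc : 0 < c) (hs : 0 < s) {δ : ℝ} (hδ : 0 < δ) :
    μ.real {ω | δ ≤ |X ω|} ≤ 2 * exp (-δ ^ 2 / (2 * c + 2 * δ / s)) := by
  have hsplit : {ω | δ ≤ |X ω|} = {ω | δ ≤ X ω} ∪ {ω | δ ≤ (-X) ω} := by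
    ext ω
    simp only [Set.mem_ofPred_eq, Set.mem_union, Pi.neg_apply, le_abs]
  calc μ.real {ω | δ ≤ |X ω|} ≤ μ.real {ω | δ ≤ X ω} + μ.real {ω | δ ≤ (-X) ω} := by
        rw [hsplit]; exact measureReal_union_le _ _
    _ ≤ _ := by
        linarith [hX.measureReal_ge_le hc hs hδ, hX.neg.measureReal_ge_le hc hs hδ]

end HasSubexponentialMGF

lemma iIndepFun.hasSubexponentialMGF_sum {ι : Type*} [Fintype ι] {X : ι → Ω → ℝ}
    (h_indep : iIndepFun X μ) (h_meas : ∀ i, Measurable (X i)) {c : ι → ℝ} {s : ℝ}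
    (h : ∀ i, HasSubexponentialMGF (X i) (c i) s μ) :
    HasSubexponentialMGF (∑ i, X i) (∑ i, c i) s μ := by
  have := h_indep.isProbabilityMeasure
  intro t ht
  refine ⟨h_indep.integrable_exp_mul_sum h_meas fun i _ => (h i t ht).1, ?_⟩
  calc mgf (∑ i, X i) μ t = ∏ i, mgf (X i) μ t := h_indep.mgf_sum h_meas _
    _ ≤ ∏ i, exp (c i * t ^ 2 / 2) :=
        Finset.prod_le_prod (fun i _ => mgf_nonneg) fun i _ => (h i t ht).2
    _ = exp ((∑ i, c i) * t ^ 2 / 2) := by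
        rw [← exp_sum, Finset.sum_mul, Finset.sum_div]

lemma mgf_sub_integral_le [IsProbabilityMeasure μ] {Y : Ω → ℝ} (hY : AEMeasurable Y μ) {t : ℝ}
    (h : Integrable (fun ω => Y ω ^ 2 * exp |t * Y ω|) μ) :
    Integrable (fun ω => exp (t * (Y ω - μ[Y]))) μ ∧
      mgf (fun ω => Y ω - μ[Y]) μ t ≤ exp (t ^ 2 * ∫ ω, Y ω ^ 2 * exp |t * Y ω| ∂μ) := by
  set V := ∫ ω, Y ω ^ 2 * exp |t * Y ω| ∂μ
  have hY_int : Integrable Y μ := by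
    refine ((integrable_const 1).add h).mono' hY.aestronglyMeasurable (ae_of_all _ fun ω => ?_)
    have := le_mul_of_one_le_right (sq_nonneg (Y ω)) (one_le_exp (abs_nonneg (t * Y ω)))
    rw [norm_eq_abs, Pi.add_apply]
    nlinarith [sq_nonneg (|Y ω| - 1), sq_abs (Y ω)]
  have hdom : ∀ ω, exp (t * Y ω) ≤ 1 + t * Y ω + t ^ 2 * (Y ω ^ 2 * exp |t * Y ω|) := fun ω => by
    simpa only [mul_pow, mul_assoc] using exp_le_one_add_add_sq_mul_exp_abs (t * Y ω)
  have hlin_int : Integrable (fun ω => 1 + t * Y ω) μ :=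
    (integrable_const 1).add (hY_int.const_mul t)
  have hdom_int : Integrable (fun ω => 1 + t * Y ω + t ^ 2 * (Y ω ^ 2 * exp |t * Y ω|)) μ :=
    hlin_int.add (h.const_mul _)
  have hexp_int : Integrable (fun ω => exp (t * Y ω)) μ :=
    hdom_int.mono' (hY.const_mul t).exp.aestronglyMeasurable
      (ae_of_all _ fun ω => (norm_of_nonneg (exp_pos _).le).trans_le (hdom ω))
  have hmgf : mgf Y μ t ≤ exp (t * μ[Y] + t ^ 2 * V) :=
    calc mgf Y μ t ≤ ∫ ω, 1 + t * Y ω + t ^ 2 * (Y ω ^ 2 * exp |t * Y ω|) ∂μ :=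
          integral_mono hexp_int hdom_int hdom
      _ = t * μ[Y] + t ^ 2 * V + 1 := by
          rw [integral_add hlin_int (h.const_mul _),
            integral_add (integrable_const 1) (hY_int.const_mul t), integral_const,
            integral_const_mul, integral_const_mul]
          simp only [probReal_univ, smul_eq_mul, one_mul]
          ring
      _ ≤ exp (t * μ[Y] + t ^ 2 * V) := add_one_le_exp _
  simp_rw [sub_eq_add_neg]
  refine ⟨?_, ?_⟩
  · simp_rw [mul_add, exp_add]
    exact hexp_int.mul_const _
  · rw [mgf_add_const, ← le_div_iff₀ (exp_pos _), ← exp_sub]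
    exact hmgf.trans_eq (congrArg exp (by ring))

lemma integrable_and_integral_le_of_lintegral_le {f : Ω → ℝ} (hf : AEStronglyMeasurable f μ)
    (hf0 : 0 ≤ᵐ[μ] f) {r : ℝ} (hr : 0 ≤ r) (h : ∫⁻ ω, ENNReal.ofReal (f ω) ∂μ ≤ ENNReal.ofReal r) :
    Integrable f μ ∧ ∫ ω, f ω ∂μ ≤ r := by
  have hfi : Integrable f μ :=
    ⟨hf, (hasFiniteIntegral_iff_ofReal hf0).mpr (h.trans_lt ENNReal.ofReal_lt_top)⟩
  refine ⟨hfi, ?_⟩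
  rw [integral_eq_lintegral_of_nonneg_ae hf0 hf]
  exact ENNReal.toReal_le_of_le_ofReal hr h

lemma integral_mul_le_of_condExp_le {m : MeasurableSpace Ω} [IsFiniteMeasure μ] (hm : m ≤ mΩ)
    {f g : Ω → ℝ} {C R : ℝ} (hg : StronglyMeasurable[m] g) (hg0 : ∀ ω, 0 ≤ g ω)
    (hgR : ∀ ω, g ω ≤ R) (hf : Integrable f μ) (hfC : μ[f | m] ≤ᵐ[μ] fun _ => C) :
    ∫ ω, g ω * f ω ∂μ ≤ C * ∫ ω, g ω ∂μ := by
  have hg_bound : ∀ᵐ ω ∂μ, ‖g ω‖ ≤ R :=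
    ae_of_all _ fun ω => (Real.norm_of_nonneg (hg0 ω)).trans_le (hgR ω)
  have hg_int : Integrable g μ := .of_bound (hg.mono hm).aestronglyMeasurable R hg_bound
  calc ∫ ω, g ω * f ω ∂μ = ∫ ω, μ[g * f | m] ω ∂μ := (integral_condExp hm).symm
    _ = ∫ ω, g ω * μ[f | m] ω ∂μ :=
        integral_congr_ae (condExp_stronglyMeasurable_mul_of_bound hm hg hf R hg_bound)
    _ ≤ ∫ ω, g ω * C ∂μ := by
        refine integral_mono_ae (integrable_condExp.bdd_mul (hg.mono hm).aestronglyMeasurable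
          hg_bound) (hg_int.mul_const C) ?_
        filter_upwards [hfC] with ω hω
        exact mul_le_mul_of_nonneg_left hω (hg0 ω)
    _ = C * ∫ ω, g ω ∂μ := by rw [integral_mul_const, mul_comm]

lemma withDensity_tail_le_of_condExp_tail [IsFiniteMeasure μ] {β : Type*}
    {mβ : MeasurableSpace β} {W : Ω → β} {U : Ω → ℝ} (hW : Measurable W) (hU : Measurable U)
    {K r : ℝ} (hK : 0 < K) (hr : 1 ≤ r)
    (htail : ∀ t : ℝ, 0 ≤ t → μ[Set.indicator {ω | t < |U ω|} (fun _ => (1 : ℝ)) |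
      MeasurableSpace.comap W mβ] ≤ᵐ[μ] fun _ => exp (1 - (t / K) ^ r))
    {w : β → ℝ} (hw : Measurable w) (hw0 : ∀ x, 0 ≤ w x) (hw1 : ∀ x, w x ≤ 1) {τ : ℝ}
    (hτ : 0 < τ) :
    μ.withDensity (fun ω => ENNReal.ofReal (w (W ω))) {ω | τ < |U ω|} ≤
      ENNReal.ofReal (exp 2 * (∫ ω, w (W ω) ∂μ) * exp (-(K⁻¹ * τ))) := by
  set S := {ω | τ < |U ω|}
  have hS : MeasurableSet S := measurableSet_lt measurable_const hU.abs
  have hwW_int : Integrable (fun ω => w (W ω)) μ :=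
    .of_bound (hw.comp hW).aestronglyMeasurable 1
      (ae_of_all _ fun ω => (Real.norm_of_nonneg (hw0 _)).trans_le (hw1 _))
  have hweighted : ∫ ω, w (W ω) * S.indicator (fun _ => (1 : ℝ)) ω ∂μ ≤
      exp (1 - (τ / K) ^ r) * ∫ ω, w (W ω) ∂μ :=
    integral_mul_le_of_condExp_le hW.comap_le
      (hw.comp (comap_measurable W)).stronglyMeasurable (fun _ => hw0 _) (fun _ => hw1 _)
      ((integrable_const 1).indicator hS) (htail τ hτ.le)
  have hrate : exp (1 - (τ / K) ^ r) ≤ exp 2 * exp (-(K⁻¹ * τ)) := by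
    rw [← exp_add, exp_le_exp, inv_mul_eq_div]
    linarith [sub_one_le_rpow (div_nonneg hτ.le hK.le) hr]
  calc μ.withDensity (fun ω => ENNReal.ofReal (w (W ω))) S
      = ENNReal.ofReal (∫ ω in S, w (W ω) ∂μ) := by
        rw [withDensity_apply _ hS]
        exact (ofReal_integral_eq_lintegral_ofReal hwW_int.integrableOn
          (ae_of_all _ fun _ => hw0 _)).symm
    _ = ENNReal.ofReal (∫ ω, w (W ω) * S.indicator (fun _ => (1 : ℝ)) ω ∂μ) := by
        rw [← integral_indicator hS]
        congr 2 with ω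
        by_cases hω : ω ∈ S <;> simp [hω]
    _ ≤ ENNReal.ofReal (exp 2 * (∫ ω, w (W ω) ∂μ) * exp (-(K⁻¹ * τ))) := by
        refine ENNReal.ofReal_le_ofReal (hweighted.trans ?_)
        calc exp (1 - (τ / K) ^ r) * ∫ ω, w (W ω) ∂μ
            ≤ exp 2 * exp (-(K⁻¹ * τ)) * ∫ ω, w (W ω) ∂μ :=
              mul_le_mul_of_nonneg_right hrate (integral_nonneg fun _ => hw0 _)
          _ = exp 2 * (∫ ω, w (W ω) ∂μ) * exp (-(K⁻¹ * τ)) := by ring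

lemma integral_mul_sq_mul_exp_le_of_condExp_tail [IsFiniteMeasure μ] {β : Type*}
    {mβ : MeasurableSpace β} {W : Ω → β} {U : Ω → ℝ} (hW : Measurable W) (hU : Measurable U)
    {K r : ℝ} (hK : 0 < K) (hr : 1 ≤ r)
    (htail : ∀ t : ℝ, 0 ≤ t → μ[Set.indicator {ω | t < |U ω|} (fun _ => (1 : ℝ)) |
      MeasurableSpace.comap W mβ] ≤ᵐ[μ] fun _ => exp (1 - (t / K) ^ r))
    {w : β → ℝ} (hw : Measurable w) (hw0 : ∀ x, 0 ≤ w x) (hw1 : ∀ x, w x ≤ 1) :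
    Integrable (fun ω => w (W ω) * (U ω ^ 2 * exp (K⁻¹ / 2 * |U ω|))) μ ∧
      ∫ ω, w (W ω) * (U ω ^ 2 * exp (K⁻¹ / 2 * |U ω|)) ∂μ ≤
        16 * exp 2 * K ^ 2 * ∫ ω, w (W ω) ∂μ := by
  have hmass : 0 ≤ ∫ ω, w (W ω) ∂μ := integral_nonneg fun ω => hw0 _
  have hlc := lintegral_sq_mul_exp_le_of_tail _ hU.abs (fun ω => abs_nonneg _)
    (by positivity) (inv_pos.mpr hK)
    fun τ hτ => withDensity_tail_le_of_condExp_tail hW hU hK hr htail hw hw0 hw1 hτ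
  refine integrable_and_integral_le_of_lintegral_le (by fun_prop) (ae_of_all _ fun ω => by
    have := hw0 (W ω); positivity) (by positivity) ?_
  calc ∫⁻ ω, ENNReal.ofReal (w (W ω) * (U ω ^ 2 * exp (K⁻¹ / 2 * |U ω|))) ∂μ
      = ∫⁻ ω, ENNReal.ofReal (|U ω| ^ 2 * exp (K⁻¹ / 2 * |U ω|))
          ∂μ.withDensity fun ω => ENNReal.ofReal (w (W ω)) := by
        have hdensity : Measurable fun ω => ENNReal.ofReal (w (W ω)) := by fun_prop
        rw [lintegral_withDensity_eq_lintegral_mul _ hdensity (by fun_prop)]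
        refine lintegral_congr fun ω => ?_
        rw [Pi.mul_apply, sq_abs, ENNReal.ofReal_mul (hw0 _)]
    _ ≤ ENNReal.ofReal (16 * (exp 2 * ∫ ω, w (W ω) ∂μ) / K⁻¹ ^ 2) := hlc
    _ = ENNReal.ofReal (16 * exp 2 * K ^ 2 * ∫ ω, w (W ω) ∂μ) := by
        congr 1
        field_simp

lemma hasSubexponentialMGF_mul_sub_integral [IsProbabilityMeasure μ] {β : Type*}
    {mβ : MeasurableSpace β} {W : Ω → β} {U : Ω → ℝ} (hW : Measurable W) (hU : Measurable U)
    {K r : ℝ} (hK : 0 < K) (hr : 1 ≤ r)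
    (htail : ∀ t : ℝ, 0 ≤ t → μ[Set.indicator {ω | t < |U ω|} (fun _ => (1 : ℝ)) |
      MeasurableSpace.comap W mβ] ≤ᵐ[μ] fun _ => exp (1 - (t / K) ^ r))
    {B : β → ℝ} (hB : Measurable B) (hB01 : ∀ x, 0 ≤ B x ∧ B x ≤ 1) {c : ℝ}
    (hBc : ∫ ω, B (W ω) ^ 2 ∂μ ≤ c) :
    HasSubexponentialMGF (fun ω => B (W ω) * U ω - ∫ ω', B (W ω') * U ω' ∂μ)
      (32 * exp 2 * K ^ 2 * c) (K⁻¹ / 2) μ := by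
  intro t ht
  set Y : Ω → ℝ := fun ω => B (W ω) * U ω
  obtain ⟨hH_int, hH⟩ := integral_mul_sq_mul_exp_le_of_condExp_tail hW hU hK hr htail
    (hB.pow_const 2) (fun x => sq_nonneg (B x)) fun x => pow_le_one₀ (hB01 x).1 (hB01 x).2
  have hdom : ∀ ω, Y ω ^ 2 * exp |t * Y ω| ≤
      B (W ω) ^ 2 * (U ω ^ 2 * exp (K⁻¹ / 2 * |U ω|)) := by
    intro ω
    obtain ⟨h0, h1⟩ := hB01 (W ω)
    have hexponent : |t * Y ω| ≤ K⁻¹ / 2 * |U ω| := by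
      rw [abs_mul, abs_mul, abs_of_nonneg h0, ← mul_assoc, mul_comm |t|, mul_assoc]
      calc B (W ω) * (|t| * |U ω|) ≤ 1 * (K⁻¹ / 2 * |U ω|) := by gcongr
        _ = K⁻¹ / 2 * |U ω| := one_mul _
    calc Y ω ^ 2 * exp |t * Y ω| = B (W ω) ^ 2 * (U ω ^ 2 * exp |t * Y ω|) := by ring
      _ ≤ B (W ω) ^ 2 * (U ω ^ 2 * exp (K⁻¹ / 2 * |U ω|)) := by gcongr
  have hY : Measurable Y := (hB.comp hW).mul hU
  have hint : Integrable (fun ω => Y ω ^ 2 * exp |t * Y ω|) μ :=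
    hH_int.mono' (by fun_prop)
      (ae_of_all _ fun ω => (norm_of_nonneg (by positivity)).trans_le (hdom ω))
  obtain ⟨hexp, hmgf⟩ := mgf_sub_integral_le hY.aemeasurable hint
  refine ⟨hexp, hmgf.trans (exp_le_exp.mpr ?_)⟩
  have hV : ∫ ω, Y ω ^ 2 * exp |t * Y ω| ∂μ ≤ 16 * exp 2 * K ^ 2 * c :=
    (integral_mono hint hH_int hdom).trans (hH.trans (by gcongr))
  calc t ^ 2 * ∫ ω, Y ω ^ 2 * exp |t * Y ω| ∂μ ≤ t ^ 2 * (16 * exp 2 * K ^ 2 * c) := by gcongr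
    _ = 32 * exp 2 * K ^ 2 * c * t ^ 2 / 2 := by ring

/-- Core concentration bound of Lemma 5: there exist constants `b₁, b₂ > 0`
depending only on `K` and `r` such that for i.i.d. pairs `(Wᵢ, Uᵢ)` whose second
coordinate has a conditional exponential tail with parameters `(K, r)` given the
first, and any measurable `B` with `0 ≤ B ≤ 1` and `E[B(W₁)²] ≤ c`, the centered
sum `Σᵢ (B(Wᵢ)Uᵢ - E[B(W₁)U₁])` satisfies a Bernstein-type tail bound
`P(|Σ| ≥ δ) ≤ 2 exp (-δ²/(b₁ c n + b₂ δ))`. -/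
theorem bernstein_concentration_spline_product :
    ∀ K r : ℝ, 0 < K → 1 ≤ r →
      ∃ b₁ : ℝ, 0 < b₁ ∧ ∃ b₂ : ℝ, 0 < b₂ ∧
        ∀ (Ω : Type) [MeasurableSpace Ω] (μ : Measure Ω) [IsProbabilityMeasure μ]
          (n : ℕ) (hn : 0 < n) (V : Fin n → Ω → ℝ × ℝ),
          (∀ i, Measurable (V i)) →
          iIndepFun V μ →
          (∀ i j, μ.map (V i) = μ.map (V j)) →
          (∀ i, ∀ t : ℝ, 0 ≤ t →
            μ[Set.indicator {ω | t < |(V i ω).2|} (fun _ => (1 : ℝ)) |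
                MeasurableSpace.comap (fun ω => (V i ω).1) inferInstance] ≤ᵐ[μ]
              fun _ => Real.exp (1 - (t / K) ^ r)) →
          ∀ Bfun : ℝ → ℝ, Measurable Bfun → (∀ x, 0 ≤ Bfun x ∧ Bfun x ≤ 1) →
          ∀ c : ℝ, 0 < c →
          (∀ i, ∫ ω, Bfun ((V i ω).1) ^ 2 ∂μ ≤ c) →
          ∀ δ : ℝ, 0 < δ →
            (μ {ω | δ ≤ |∑ i, (Bfun ((V i ω).1) * (V i ω).2 -
                ∫ ω', Bfun ((V ⟨0, hn⟩ ω').1) * (V ⟨0, hn⟩ ω').2 ∂μ)|}).toReal ≤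
              2 * Real.exp (-δ ^ 2 / (b₁ * c * n + b₂ * δ)) := by
  intro K r hK hr
  refine ⟨64 * exp 2 * K ^ 2, by positivity, 4 * K, by positivity, ?_⟩
  intro Ω _ μ _ n hn V hV hindep hident htail B hB hB01 c hc hBc δ hδ
  set Y : Fin n → Ω → ℝ := fun i ω => B (V i ω).1 * (V i ω).2
  set E := ∫ ω, Y ⟨0, hn⟩ ω ∂μ
  have hmean : ∀ i, ∫ ω, Y i ω ∂μ = E := fun i =>
    (IdentDistrib.comp ⟨(hV i).aemeasurable, (hV _).aemeasurable, hident i _⟩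
      ((hB.comp measurable_fst).mul measurable_snd)).integral_eq
  have hZ : ∀ i, HasSubexponentialMGF (fun ω => Y i ω - E) (32 * exp 2 * K ^ 2 * c) (K⁻¹ / 2) μ :=
    fun i => hmean i ▸ hasSubexponentialMGF_mul_sub_integral (hV i).fst (hV i).snd hK hr
      (htail i) hB hB01 (hBc i)
  have hsum := iIndepFun.hasSubexponentialMGF_sum
    (hindep.comp (fun _ p => B p.1 * p.2 - E)
      fun _ => ((hB.comp measurable_fst).mul measurable_snd).sub_const E)
    (fun i => ((hB.comp (hV i).fst).mul (hV i).snd).sub_const E) hZ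
  rw [Finset.sum_const, Finset.card_univ, Fintype.card_fin, nsmul_eq_mul] at hsum
  have hn' : (0 : ℝ) < n := Nat.cast_pos.mpr hn
  calc (μ {ω | δ ≤ |∑ i, (Y i ω - E)|}).toReal
      = μ.real {ω | δ ≤ |(∑ i, fun ω => Y i ω - E) ω|} := by simp only [Finset.sum_apply]; rfl
    _ ≤ 2 * exp (-δ ^ 2 / (2 * (n * (32 * exp 2 * K ^ 2 * c)) + 2 * δ / (K⁻¹ / 2))) :=
        hsum.measureReal_abs_ge_le (mul_pos hn' (by positivity)) (by positivity) hδ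
    _ = 2 * exp (-δ ^ 2 / (64 * exp 2 * K ^ 2 * c * n + 4 * K * δ)) := by
        congr 4
        · ring
        · field_simp; ring
end
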